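/- arXiv:2007.08246 — 12 statements merged into one kernel-verified Lean document; each statement's English description precedes it below -/
import Mathlib

section
/- Fix an agent i, a price p > 0 per unit, a permutation π of {1,…,n}, and a real β > 0. Then the expected utility of agent i under sequential posted pricing satisfies E[u_i(ω,π)] ≥ β · ( E[v_i(ω)(x_i(ω))] − p·E[x_i(ω)] ) · ( 1 − e^{−1/β} − ∫_0^{1−e^{−1/β}} Pr[ Σ_{j preceding i in π} y*_j(ω) ≥ t ] dt ), for every allocation rule x. -/
/-!
Pointwise, agent `i` facing the residual supply `r = (1 - S)⁺` can buy `r • y*ᵢ`; concavity and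
`vᵢ(0) ≥ 0` make her utility at least `r` times her surplus `vᵢ(c) - p c` at any `c ∈ [0,1]`, in
particular at `c = xᵢ(ω')` for every `ω'` agreeing with `ω` off the agents preceding `i`. As `S`
depends only on those agents, independence gives `E[uᵢ] ≥ E[(1 - S)⁺] · E[vᵢ(xᵢ) - p xᵢ]`.
Finally `β (q - min S q) ≤ (1 - S)⁺` for `q = 1 - e^{-1/β}` (as `β q ≤ 1`), and the layer-cake
formula gives `E[min S q] = ∫₀^q Pr[t ≤ S] dt`.
-/

open MeasureTheory Set

theorem ConcaveOn.mul_sub_mul_le_of_isMaxOn {f : ℝ → ℝ} {p r y c U : ℝ}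
    (hf : ConcaveOn ℝ (Icc 0 1) f) (hf0 : 0 ≤ f 0) (hy : y ∈ Icc (0 : ℝ) 1)
    (hmax : IsMaxOn (fun z => f z - p * z) (Icc 0 1) y) (hr : r ∈ Icc (0 : ℝ) 1)
    (hU : ∀ z ∈ Icc 0 r, f z - p * z ≤ U) (hc : c ∈ Icc (0 : ℝ) 1) :
    r * (f c - p * c) ≤ U := by
  obtain ⟨hr0, hr1⟩ := hr
  have hconc : r * f y + (1 - r) * f 0 ≤ f (r * y) := by
    simpa using hf.2 hy (left_mem_Icc.2 zero_le_one) hr0 (sub_nonneg.2 hr1) (by ring)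
  calc r * (f c - p * c) ≤ r * (f y - p * y) := mul_le_mul_of_nonneg_left (hmax hc) hr0
    _ ≤ f (r * y) - p * (r * y) := by linarith [mul_nonneg (sub_nonneg.2 hr1) hf0]
    _ ≤ U := hU _ ⟨mul_nonneg hr0 hy.1, mul_le_of_le_one_right hr0 hy.2⟩

theorem mul_one_sub_exp_neg_inv_le_one {β : ℝ} (hβ : 0 < β) :
    β * (1 - Real.exp (-1 / β)) ≤ 1 := by
  have hexp := Real.add_one_le_exp (-1 / β)
  have hβinv : β * (-1 / β) = -1 := by field_simp
  nlinarith

theorem one_sub_exp_neg_inv_nonneg {β : ℝ} (hβ : 0 ≤ β) : 0 ≤ 1 - Real.exp (-1 / β) :=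
  sub_nonneg.2 (Real.exp_le_one_iff.2 (div_nonpos_of_nonpos_of_nonneg (by norm_num) hβ))

theorem mul_sub_min_le_max_zero_one_sub {β q s : ℝ} (hq : q ≤ 1)
    (hβq : β * q ≤ 1) (hs : 0 ≤ s) : β * (q - min s q) ≤ max 0 (1 - s) := by
  rcases le_total s q with hsq | hqs
  · rw [min_eq_left hsq]
    refine le_max_of_le_right ?_
    rcases le_total β 1 with hβ1 | hβ1 <;> nlinarith
  · rw [min_eq_right hqs, sub_self, mul_zero]
    exact le_max_left _ _

section Shortfall

variable {α : Type*} [MeasurableSpace α] {μ : Measure α} {S : α → ℝ}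

theorem integrable_min_const_of_nonneg [IsFiniteMeasure μ] (hS : AEMeasurable S μ)
    (hS0 : 0 ≤ᵐ[μ] S) {q : ℝ} (hq : 0 ≤ q) : Integrable (fun ω => min (S ω) q) μ := by
  refine .of_bound (hS.min aemeasurable_const).aestronglyMeasurable q ?_
  filter_upwards [hS0] with ω hω
  rw [Real.norm_eq_abs, abs_of_nonneg (le_min hω hq)]
  exact min_le_right _ _

theorem integrable_max_zero_one_sub_of_nonneg [IsFiniteMeasure μ] (hS : AEMeasurable S μ)
    (hS0 : 0 ≤ᵐ[μ] S) : Integrable (fun ω => max 0 (1 - S ω)) μ := by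
  refine .of_bound (aemeasurable_const.max (aemeasurable_const.sub hS)).aestronglyMeasurable 1 ?_
  filter_upwards [hS0] with ω hω
  rw [Real.norm_eq_abs, abs_of_nonneg (le_max_left _ _)]
  exact max_le zero_le_one (by linarith [show 0 ≤ S ω from hω])

theorem integral_min_const_eq_intervalIntegral [IsFiniteMeasure μ] (hS : AEMeasurable S μ)
    (hS0 : 0 ≤ᵐ[μ] S) {q : ℝ} (hq : 0 ≤ q) :
    ∫ ω, min (S ω) q ∂μ = ∫ t in 0..q, μ.real {ω | t ≤ S ω} := by
  have htrunc : ∀ t ∈ Ioi (0 : ℝ), μ.real {ω | t ≤ min (S ω) q} =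
      (Ioc 0 q).indicator (fun t => μ.real {ω | t ≤ S ω}) t := by
    intro t ht
    by_cases htq : t ≤ q
    · simp [indicator_of_mem (show t ∈ Ioc 0 q from ⟨ht, htq⟩), htq]
    · simp [htq]
  rw [(integrable_min_const_of_nonneg hS hS0 hq).integral_eq_integral_meas_le
      (hS0.mono fun ω hω => le_min hω hq),
    setIntegral_congr_fun measurableSet_Ioi htrunc, integral_indicator measurableSet_Ioc,
    Measure.restrict_restrict measurableSet_Ioc, inter_eq_left.2 Ioc_subset_Ioi_self,
    intervalIntegral.integral_of_le hq]

variable [IsProbabilityMeasure μ]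

theorem intervalIntegral_measureReal_le_le_self (hS : AEMeasurable S μ) (hS0 : 0 ≤ᵐ[μ] S)
    {q : ℝ} (hq : 0 ≤ q) : ∫ t in 0..q, μ.real {ω | t ≤ S ω} ≤ q := by
  rw [← integral_min_const_eq_intervalIntegral hS hS0 hq]
  simpa using integral_mono_ae (integrable_min_const_of_nonneg hS hS0 hq) (integrable_const q)
    (ae_of_all _ fun ω => min_le_right _ q)

theorem mul_sub_intervalIntegral_le_integral_max_zero_one_sub (hS : AEMeasurable S μ)
    (hS0 : 0 ≤ᵐ[μ] S) {β : ℝ} (hβ : 0 < β) :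
    β * (1 - Real.exp (-1 / β) -
        ∫ t in 0..(1 - Real.exp (-1 / β)), μ.real {ω | t ≤ S ω}) ≤
      ∫ ω, max 0 (1 - S ω) ∂μ := by
  set q := 1 - Real.exp (-1 / β)
  have hq0 : 0 ≤ q := one_sub_exp_neg_inv_nonneg hβ.le
  have hq1 : q ≤ 1 := sub_le_self _ (Real.exp_pos _).le
  have hmin := integrable_min_const_of_nonneg hS hS0 hq0
  calc β * (q - ∫ t in 0..q, μ.real {ω | t ≤ S ω}) = ∫ ω, β * (q - min (S ω) q) ∂μ := by
        rw [integral_const_mul, integral_sub (integrable_const q) hmin, integral_const,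
          probReal_univ, one_smul, integral_min_const_eq_intervalIntegral hS hS0 hq0]
    _ ≤ ∫ ω, max 0 (1 - S ω) ∂μ :=
        integral_mono_ae (((integrable_const q).sub hmin).const_mul β)
          (integrable_max_zero_one_sub_of_nonneg hS hS0)
          (hS0.mono fun ω hω => mul_sub_min_le_max_zero_one_sub hq1
            (mul_one_sub_exp_neg_inv_le_one hβ) hω)

end Shortfall

theorem integral_mul_integral_le_of_ae_forall {α β : Type*} [MeasurableSpace α]
    [MeasurableSpace β] {μ : Measure α} {ν : Measure β} [IsProbabilityMeasure μ] [SFinite ν]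
    {ρ : α → ℝ} {W U : α × β → ℝ} (hρ : Integrable ρ μ) (hW : Integrable W (μ.prod ν))
    (hU : Integrable U (μ.prod ν)) (h : ∀ᵐ z ∂μ.prod ν, ∀ a, ρ z.1 * W (a, z.2) ≤ U z) :
    (∫ a, ρ a ∂μ) * ∫ z, W z ∂μ.prod ν ≤ ∫ z, U z ∂μ.prod ν := by
  have hslice : ∀ᵐ a ∂μ, (∫ a', ρ a' ∂μ) * ∫ b, W (a, b) ∂ν ≤ ∫ z, U z ∂μ.prod ν := by
    filter_upwards [hW.prod_right_ae] with a hWa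
    rw [← integral_prod_mul]
    exact integral_mono_ae (hρ.mul_prod hWa) hU (h.mono fun z hz => hz a)
  calc (∫ a, ρ a ∂μ) * ∫ z, W z ∂μ.prod ν
      = ∫ a, (∫ a', ρ a' ∂μ) * ∫ b, W (a, b) ∂ν ∂μ := by
        rw [integral_prod W hW, integral_const_mul]
    _ ≤ ∫ _ : α, ∫ z, U z ∂μ.prod ν ∂μ :=
        integral_mono_ae (hW.integral_prod_left.const_mul _) (integrable_const _) hslice
    _ = ∫ z, U z ∂μ.prod ν := by simp

theorem integral_mul_integral_le_of_forall_eq_off {ι : Type*} [Fintype ι] {Ω : ι → Type*}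
    [∀ i, MeasurableSpace (Ω i)] {μ : ∀ i, Measure (Ω i)} [∀ i, IsProbabilityMeasure (μ i)]
    (P : ι → Prop) [DecidablePred P] {R W U : (∀ i, Ω i) → ℝ}
    (hR_dep : ∀ ω ω', (∀ i, P i → ω i = ω' i) → R ω = R ω')
    (hR : Integrable R (Measure.pi μ)) (hW : Integrable W (Measure.pi μ))
    (hU : Integrable U (Measure.pi μ))
    (h : ∀ᵐ ω ∂Measure.pi μ, ∀ ω', (∀ i, ¬P i → ω' i = ω i) → R ω * W ω' ≤ U ω) :
    (∫ ω, R ω ∂Measure.pi μ) * ∫ ω, W ω ∂Measure.pi μ ≤ ∫ ω, U ω ∂Measure.pi μ := by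
  set e := MeasurableEquiv.piEquivPiSubtypeProd Ω P
  set μP := Measure.pi fun i : {i // P i} => μ i
  set μQ := Measure.pi fun i : {i // ¬P i} => μ i
  have he : MeasurePreserving e.symm (μP.prod μQ) (Measure.pi μ) :=
    (measurePreserving_piEquivPiSubtypeProd μ P).symm e
  have hint {F : (∀ i, Ω i) → ℝ} (hF : Integrable F (Measure.pi μ)) :
      Integrable (F ∘ e.symm) (μP.prod μQ) :=
    (he.integrable_comp_emb e.symm.measurableEmbedding).2 hF
  have hinteg (F : (∀ i, Ω i) → ℝ) : ∫ z, F (e.symm z) ∂μP.prod μQ = ∫ ω, F ω ∂Measure.pi μ :=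
    he.integral_comp e.symm.measurableEmbedding F
  have : ∀ i, Nonempty (Ω i) := fun i => nonempty_of_isProbabilityMeasure (μ i)
  set ρ := fun a => R (e.symm (a, fun _ => Classical.arbitrary _))
  have hRρ : ∀ z, R (e.symm z) = ρ z.1 := fun z =>
    hR_dep _ _ fun i hi => by simp [e, hi]
  have hρ : Integrable ρ μP := by
    simpa [hRρ] using (hint hR).integral_prod_left
  have key := integral_mul_integral_le_of_ae_forall hρ (hint hW) (hint hU) <| by
    filter_upwards [he.quasiMeasurePreserving.ae h] with z hz a
    rw [← hRρ]
    exact hz _ fun i hi => by simp [e, hi]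
  simpa only [← hinteg, hRρ, integral_fun_fst, probReal_univ, one_smul, Function.comp_def]
    using key

theorem stmt_0_general
    {n : ℕ} {Ω : Fin n → Type*} [∀ j, MeasurableSpace (Ω j)]
    (μ : ∀ j, Measure (Ω j)) [∀ j, IsProbabilityMeasure (μ j)]
    (v : ∀ j, Ω j → ℝ → ℝ) (ystar : ∀ j, Ω j → ℝ) (p : ℝ)
    -- valuations are a.s. nonnegative, nondecreasing and concave on [0,1]
    (hval : ∀ j, ∀ᵐ ωj ∂ μ j, (∀ z ∈ Set.Icc (0:ℝ) 1, 0 ≤ v j ωj z) ∧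
        MonotoneOn (v j ωj) (Set.Icc (0:ℝ) 1) ∧ ConcaveOn ℝ (Set.Icc (0:ℝ) 1) (v j ωj))
    -- y*_j ∈ [0,1] is measurable and maximizes v_j(z) − p·z over z ∈ [0,1]
    (hystar_meas : ∀ j, Measurable (ystar j))
    (hystar : ∀ j, ∀ᵐ ωj ∂ μ j, ystar j ωj ∈ Set.Icc (0:ℝ) 1 ∧
        ∀ z ∈ Set.Icc (0:ℝ) 1, v j ωj z - p * z ≤ v j ωj (ystar j ωj) - p * ystar j ωj)
    (π : Equiv.Perm (Fin n)) (i : Fin n) (β : ℝ) (hβ : 0 < β)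
    (S u : (∀ j, Ω j) → ℝ)
    (hS : ∀ ω, S ω = ∑ j ∈ Finset.univ.filter (fun j => π j < π i), ystar j (ω j))
    -- constrained utility maximization of agent i
    (humax : ∀ᵐ ω ∂ Measure.pi μ, ∀ z ∈ Set.Icc (0:ℝ) (max 0 (1 - S ω)),
        v i (ω i) z - p * z ≤ u ω)
    -- allocation rule
    (x : (∀ j, Ω j) → Fin n → ℝ)
    (hx_mem : ∀ ω j, x ω j ∈ Set.Icc (0:ℝ) 1)
    -- integrability of the displayed random variables
    (hint_u : Integrable u (Measure.pi μ))
    (hint_vx : Integrable (fun ω => v i (ω i) (x ω i)) (Measure.pi μ))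
    (hint_x : Integrable (fun ω => x ω i) (Measure.pi μ)) :
    ∫ ω, u ω ∂(Measure.pi μ) ≥
      β * ((∫ ω, v i (ω i) (x ω i) ∂(Measure.pi μ)) - p * ∫ ω, x ω i ∂(Measure.pi μ)) *
        (1 - Real.exp (-1 / β) -
          ∫ t in (0:ℝ)..(1 - Real.exp (-1 / β)), ((Measure.pi μ) {ω | t ≤ S ω}).toReal) := by
  set ν := Measure.pi μ
  have hS_meas : Measurable S := by
    rw [funext hS]
    exact Finset.measurable_sum _ fun j _ => (hystar_meas j).comp (measurable_pi_apply j)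
  have hystar_ae : ∀ᵐ ω ∂ν, ∀ j, ystar j (ω j) ∈ Icc (0:ℝ) 1 ∧
      IsMaxOn (fun z => v j (ω j) z - p * z) (Icc 0 1) (ystar j (ω j)) :=
    Filter.eventually_all.2 fun j => Measure.tendsto_eval_ae_ae.eventually (hystar j)
  have hS0 : ∀ᵐ ω ∂ν, 0 ≤ S ω := by
    filter_upwards [hystar_ae] with ω hω
    rw [hS]
    exact Finset.sum_nonneg fun j _ => (hω j).1.1
  have hsurplus : ∀ᵐ ω ∂ν, 0 ≤ u ω ∧
      ∀ c ∈ Icc (0:ℝ) 1, max 0 (1 - S ω) * (v i (ω i) c - p * c) ≤ u ω := by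
    filter_upwards [humax, hystar_ae, Measure.tendsto_eval_ae_ae.eventually (hval i), hS0]
      with ω hmax hys hvi hSω
    have hf0 : 0 ≤ v i (ω i) 0 := hvi.1 0 (left_mem_Icc.2 zero_le_one)
    refine ⟨by linarith [hmax 0 (left_mem_Icc.2 (le_max_left _ _))], ?_⟩
    exact fun c hc => hvi.2.2.mul_sub_mul_le_of_isMaxOn hf0 (hys i).1 (hys i).2
      ⟨le_max_left _ _, max_le zero_le_one (by linarith)⟩ hmax hc
  have hindep : (∫ ω, max 0 (1 - S ω) ∂ν) * ∫ ω, (v i (ω i) (x ω i) - p * x ω i) ∂ν ≤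
      ∫ ω, u ω ∂ν := by
    refine integral_mul_integral_le_of_forall_eq_off (fun j => π j < π i) ?_
      (integrable_max_zero_one_sub_of_nonneg hS_meas.aemeasurable hS0)
      (hint_vx.sub (hint_x.const_mul p)) hint_u ?_
    · intro ω ω' h
      simp only [hS]
      rw [Finset.sum_congr rfl fun j hj => by rw [h j (Finset.mem_filter.1 hj).2]]
    · filter_upwards [hsurplus] with ω hω ω' hω'
      rw [hω' i (lt_irrefl _)]
      exact hω.2 _ (hx_mem ω' i)
  have hshortfall := mul_sub_intervalIntegral_le_integral_max_zero_one_sub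
    hS_meas.aemeasurable hS0 hβ
  have hgap := intervalIntegral_measureReal_le_le_self hS_meas.aemeasurable hS0
    (one_sub_exp_neg_inv_nonneg hβ.le)
  have hu0 : 0 ≤ ∫ ω, u ω ∂ν := integral_nonneg_of_ae (hsurplus.mono fun ω h => h.1)
  rw [ge_iff_le, ← integral_const_mul, ← integral_sub hint_vx (hint_x.const_mul p)]
  simp only [← measureReal_def]
  rcases le_total 0 (∫ ω, (v i (ω i) (x ω i) - p * x ω i) ∂ν) with hw | hw
  · linarith [mul_le_mul_of_nonneg_right hshortfall hw]
  · nlinarith [mul_nonneg hβ.le (sub_nonneg.2 hgap)]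

/-- With agents drawing independent valuations (product space `Measure.pi μ`,
agent j's valuation `v j` depending only on the j-th coordinate), price p > 0, a permutation π
and β > 0, the expected utility of agent i under sequential posted pricing satisfies
E[u_i] ≥ β·(E[v_i(x_i)] − p·E[x_i])·(1 − e^{−1/β} − ∫_0^{1−e^{−1/β}} Pr[Σ_{j≺i} y*_j ≥ t] dt)
for every allocation rule x. Here `S` is the total demand of the agents preceding i in π,
`y` is agent i's purchased fraction and `u` her utility. -/
theorem stmt_0
    {n : ℕ} {Ω : Fin n → Type*} [∀ j, MeasurableSpace (Ω j)]
    (μ : ∀ j, Measure (Ω j)) [∀ j, IsProbabilityMeasure (μ j)]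
    (v : ∀ j, Ω j → ℝ → ℝ) (ystar : ∀ j, Ω j → ℝ) (p : ℝ) (hp : 0 < p)
    -- valuations are a.s. nonnegative, nondecreasing and concave on [0,1]
    (hval : ∀ j, ∀ᵐ ωj ∂ μ j, (∀ z ∈ Set.Icc (0:ℝ) 1, 0 ≤ v j ωj z) ∧
        MonotoneOn (v j ωj) (Set.Icc (0:ℝ) 1) ∧ ConcaveOn ℝ (Set.Icc (0:ℝ) 1) (v j ωj))
    -- y*_j ∈ [0,1] is measurable and maximizes v_j(z) − p·z over z ∈ [0,1]
    (hystar_meas : ∀ j, Measurable (ystar j))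
    (hystar : ∀ j, ∀ᵐ ωj ∂ μ j, ystar j ωj ∈ Set.Icc (0:ℝ) 1 ∧
        ∀ z ∈ Set.Icc (0:ℝ) 1, v j ωj z - p * z ≤ v j ωj (ystar j ωj) - p * ystar j ωj)
    (π : Equiv.Perm (Fin n)) (i : Fin n) (β : ℝ) (hβ : 0 < β)
    (S y u : (∀ j, Ω j) → ℝ)
    (hS : ∀ ω, S ω = ∑ j ∈ Finset.univ.filter (fun j => π j < π i), ystar j (ω j))
    (hy : ∀ ω, y ω = min (ystar i (ω i)) (max 0 (1 - S ω)))
    (hu : ∀ ω, u ω = v i (ω i) (y ω) - p * y ω)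
    -- constrained utility maximization of agent i
    (humax : ∀ᵐ ω ∂ Measure.pi μ, ∀ z ∈ Set.Icc (0:ℝ) (max 0 (1 - S ω)),
        v i (ω i) z - p * z ≤ u ω)
    -- allocation rule
    (x : (∀ j, Ω j) → Fin n → ℝ) (hx_meas : Measurable x)
    (hx_mem : ∀ ω j, x ω j ∈ Set.Icc (0:ℝ) 1) (hx_sum : ∀ ω, ∑ j, x ω j = 1)
    -- integrability of the displayed random variables
    (hint_u : Integrable u (Measure.pi μ))
    (hint_vx : Integrable (fun ω => v i (ω i) (x ω i)) (Measure.pi μ))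
    (hint_x : Integrable (fun ω => x ω i) (Measure.pi μ)) :
    ∫ ω, u ω ∂(Measure.pi μ) ≥
      β * ((∫ ω, v i (ω i) (x ω i) ∂(Measure.pi μ)) - p * ∫ ω, x ω i ∂(Measure.pi μ)) *
        (1 - Real.exp (-1 / β) -
          ∫ t in (0:ℝ)..(1 - Real.exp (-1 / β)), ((Measure.pi μ) {ω | t ≤ S ω}).toReal) :=
  stmt_0_general μ v ystar p hval hystar_meas hystar π i β hβ S u hS humax x hx_mem hint_u hint_vx
    hint_x
end

section
/- Let β > 0 satisfy e^{1/β} = 2 + 1/β (β ≈ 0.872453) and set ρ₁ = e^{−1/β} ≈ 0.317844. Fix any permutation π of {1,…,n} and suppose the price p > 0 is such that E[ Σ_{i=1}^n y_i(ω,π) ] = ρ₁. Then for every allocation rule x, the expected social welfare of the mechanism satisfies E[ Σ_{i=1}^n v_i(ω)(y_i(ω,π)) ] ≥ ρ₁ · E[ Σ_{i=1}^n v_i(ω)(x_i(ω)) ]; in particular the mechanism yields a ρ₁-approximation of the optimal expected social welfare. -/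
/-!
Write `R_i = max 0 (1 - S_i)` for the supply left when agent `i` arrives. Agent `i` could buy
`min (y*_i) R_i`, and concavity of `v_i` (with `v_i 0 ≥ 0`) makes this worth at least `R_i` times
its unconstrained surplus, which dominates the surplus `v_i(x_i) - p x_i` of any allocation. As
`R_i` does not depend on agent `i`'s own type, resampling that type independently turns this
pointwise bound into `E[R_i] · E[(v_i(x_i) - p x_i)⁺] ≤ E[u_i]`. Since everything is sold unless
demand runs out, `E[R_i] ≥ 1 - E[Σ y] = 1 - ρ₁ ≥ ρ₁`, the last step because `e^{1/β} ≥ 2`.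
Summing over agents, and adding the revenue `p ρ₁` to both sides, gives
`E[Σ v_i(y_i)] ≥ ρ₁ E[Σ v_i(x_i)]`.
-/

open MeasureTheory Set Function

theorem sum_sequential_allocation_eq_min_one_sum {ι α : Type*} [DecidableEq ι] [LinearOrder α]
    {r : ι → α} (hr : Injective r) {w : ι → ℝ} (hw : ∀ j, 0 ≤ w j) (s : Finset ι) :
    ∑ j ∈ s, min (w j) (max 0 (1 - ∑ l ∈ s with r l < r j, w l)) = min 1 (∑ j ∈ s, w j) := by
  induction s using Finset.induction_on_max_value r with
  | empty => simp
  | insert a s has hmax ih =>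
    have hlt : ∀ j ∈ s, r j < r a := fun j hj =>
      (hmax j hj).lt_of_ne (hr.ne (ne_of_mem_of_not_mem hj has))
    have hprefix_a : ∑ l ∈ insert a s with r l < r a, w l = ∑ l ∈ s, w l := by
      rw [Finset.filter_insert, if_neg (lt_irrefl _), Finset.filter_true_of_mem hlt]
    have hprefix : ∀ j ∈ s, ∑ l ∈ insert a s with r l < r j, w l = ∑ l ∈ s with r l < r j, w l :=
      fun j hj => by rw [Finset.filter_insert, if_neg (hlt j hj).asymm]
    have hs_sum : ∑ j ∈ s, min (w j) (max 0 (1 - ∑ l ∈ insert a s with r l < r j, w l)) =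
        min 1 (∑ j ∈ s, w j) := by
      rw [← ih]; exact Finset.sum_congr rfl fun j hj => by rw [hprefix j hj]
    rw [Finset.sum_insert has, Finset.sum_insert has, hprefix_a, hs_sum]
    have hwa := hw a
    simp only [min_def, max_def]
    split_ifs <;> linarith

theorem one_sub_sum_sequential_allocation_le {ι α : Type*} [Fintype ι] [DecidableEq ι]
    [LinearOrder α] {r : ι → α} (hr : Injective r) {w : ι → ℝ} (hw : ∀ j, 0 ≤ w j) (i : ι) :
    1 - ∑ j, min (w j) (max 0 (1 - ∑ l with r l < r j, w l)) ≤
      max 0 (1 - ∑ l with r l < r i, w l) := by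
  rw [sum_sequential_allocation_eq_min_one_sum hr hw]
  have : ∑ l with r l < r i, w l ≤ ∑ l, w l :=
    Finset.sum_le_sum_of_subset_of_nonneg (Finset.filter_subset _ _) fun j _ _ => hw j
  rcases le_total 1 (∑ l, w l) with h | h
  · rw [min_eq_left h]; simp
  · rw [min_eq_right h]; exact le_max_of_le_right (by linarith)

theorem exp_neg_le_one_sub_exp_neg {t : ℝ} (ht : 2 ≤ Real.exp t) :
    Real.exp (-t) ≤ 1 - Real.exp (-t) := by
  have h1 : Real.exp (-t) * Real.exp t = 1 := by rw [← Real.exp_add, neg_add_cancel, Real.exp_zero]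
  nlinarith [Real.exp_pos (-t)]

theorem Finset.sum_apply_update_of_notMem {ι : Type*} [DecidableEq ι] {Ω : ι → Type*}
    {s : Finset ι} {i : ι} (hi : i ∉ s) (g : ∀ j, Ω j → ℝ) (ω : ∀ j, Ω j) (a : Ω i) :
    ∑ j ∈ s, g j (update ω i a j) = ∑ j ∈ s, g j (ω j) :=
  Finset.sum_congr rfl fun j hj => by rw [update_of_ne (ne_of_mem_of_not_mem hj hi)]

theorem integrable_max_zero_one_sub {α : Type*} [MeasurableSpace α] {μ : Measure α}
    [IsFiniteMeasure μ] {S : α → ℝ} (hS_meas : AEStronglyMeasurable S μ)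
    (hS : ∀ᵐ ω ∂μ, 0 ≤ S ω) : Integrable (fun ω => max 0 (1 - S ω)) μ := by
  refine .of_bound (by fun_prop) 1 (hS.mono fun ω h => ?_)
  rw [Real.norm_of_nonneg (le_max_left _ _)]
  exact max_le zero_le_one (by linarith)

theorem measurePreserving_update_eval {ι : Type*} [Fintype ι] [DecidableEq ι] {Ω : ι → Type*}
    [∀ j, MeasurableSpace (Ω j)] (μ : ∀ j, Measure (Ω j)) [∀ j, IsProbabilityMeasure (μ j)]
    (i : ι) :
    MeasurePreserving (fun z : (∀ j, Ω j) × (∀ j, Ω j) => update z.1 i (z.2 i))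
      ((Measure.pi μ).prod (Measure.pi μ)) (Measure.pi μ) := by
  have hmeas : Measurable fun z : (∀ j, Ω j) × (∀ j, Ω j) => update z.1 i (z.2 i) := by
    fun_prop
  refine ⟨hmeas, (Measure.pi_eq fun s hs => ?_).symm⟩
  have hpre : (fun z : (∀ j, Ω j) × (∀ j, Ω j) => update z.1 i (z.2 i)) ⁻¹' univ.pi s =
      univ.pi (update s i univ) ×ˢ (eval i ⁻¹' s i) := by
    ext z
    simp only [mem_preimage, mem_pi, mem_univ, true_implies, mem_prod]
    constructor
    · intro h
      refine ⟨fun j => ?_, by simpa using h i⟩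
      rcases eq_or_ne j i with rfl | hj
      · simp
      · simpa [hj] using h j
    · rintro ⟨h1, h2⟩ j
      rcases eq_or_ne j i with rfl | hj
      · simpa using h2
      · simpa [hj] using h1 j
  rw [Measure.map_apply hmeas (.univ_pi hs), hpre, Measure.prod_prod, Measure.pi_pi,
    (measurePreserving_eval μ i).measure_preimage (hs i).nullMeasurableSet,
    ← Finset.prod_erase_mul _ _ (Finset.mem_univ i),
    ← Finset.prod_erase_mul _ _ (Finset.mem_univ i), update_self, measure_univ, mul_one]
  exact congrArg (· * _) <|
    Finset.prod_congr rfl fun j hj => by rw [update_of_ne (Finset.ne_of_mem_erase hj)]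

theorem integral_mul_integral_le_of_update {ι : Type*} [Fintype ι] [DecidableEq ι]
    {Ω : ι → Type*} [∀ j, MeasurableSpace (Ω j)] {μ : ∀ j, Measure (Ω j)}
    [∀ j, IsProbabilityMeasure (μ j)] (i : ι) {R G U : (∀ j, Ω j) → ℝ}
    (hR : Integrable R (Measure.pi μ)) (hG : Integrable G (Measure.pi μ))
    (hU : Integrable U (Measure.pi μ)) (hRi : ∀ ω a, R (update ω i a) = R ω)
    (hle : ∀ᵐ ω ∂Measure.pi μ, ∀ ω', ω' i = ω i → R ω * G ω' ≤ U ω) :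
    (∫ ω, R ω ∂Measure.pi μ) * ∫ ω, G ω ∂Measure.pi μ ≤ ∫ ω, U ω ∂Measure.pi μ := by
  have hΦ := measurePreserving_update_eval μ i
  have hle' : ∀ᵐ z ∂(Measure.pi μ).prod (Measure.pi μ),
      R z.1 * G z.2 ≤ U (update z.1 i (z.2 i)) := by
    filter_upwards [hΦ.quasiMeasurePreserving.ae hle] with z hz
    simpa [hRi] using hz z.2
  calc (∫ ω, R ω ∂Measure.pi μ) * ∫ ω, G ω ∂Measure.pi μ
      = ∫ z, R z.1 * G z.2 ∂(Measure.pi μ).prod (Measure.pi μ) := (integral_prod_mul R G).symm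
    _ ≤ ∫ z, U (update z.1 i (z.2 i)) ∂(Measure.pi μ).prod (Measure.pi μ) :=
      integral_mono_ae (hR.mul_prod hG) (hΦ.integrable_comp_of_integrable hU) hle'
    _ = ∫ ω, U ω ∂Measure.pi μ := by
      rw [← integral_map hΦ.measurable.aemeasurable
        (by rw [hΦ.map_eq]; exact hU.aestronglyMeasurable), hΦ.map_eq]

theorem mul_sub_le_sub_min_of_concaveOn {f : ℝ → ℝ} (hf : ConcaveOn ℝ (Icc 0 1) f)
    (hf0 : 0 ≤ f 0) (p : ℝ) {w t : ℝ} (hw : w ∈ Icc (0 : ℝ) 1) (ht : t ∈ Icc (0 : ℝ) 1)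
    (hopt : f 0 ≤ f w - p * w) :
    t * (f w - p * w) ≤ f (min w t) - p * min w t := by
  rcases le_total w t with hwt | htw
  · rw [min_eq_left hwt]
    nlinarith [ht.2]
  · rw [min_eq_right htw]
    rcases hw.1.eq_or_lt with rfl | hw0
    · simpa [le_antisymm htw ht.1] using hf0
    -- concavity along the segment from `0` to `w`, at the point `t = (t / w) • w`
    have hconc := hf.2 (left_mem_Icc.2 zero_le_one) hw (sub_nonneg.2 ((div_le_one hw0).2 htw))
      (div_nonneg ht.1 hw.1) (sub_add_cancel 1 (t / w))
    simp only [smul_eq_mul, mul_zero, zero_add, div_mul_cancel₀ t hw0.ne'] at hconc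
    have htw' : t ≤ t / w := le_div_self ht.1 hw0 hw.2
    have hpt : p * t = t / w * (p * w) := by field_simp
    nlinarith [mul_le_mul_of_nonneg_right htw' (hf0.trans hopt),
      mul_nonneg (sub_nonneg.2 ((div_le_one hw0).2 htw)) hf0]

theorem mul_integral_sub_le_integral_of_remaining_supply {ι : Type*} [Fintype ι] [DecidableEq ι]
    {Ω : ι → Type*} [∀ j, MeasurableSpace (Ω j)] {μ : ∀ j, Measure (Ω j)}
    [∀ j, IsProbabilityMeasure (μ j)] (i : ι) {f : Ω i → ℝ → ℝ} {ystar : Ω i → ℝ} {p ρ : ℝ}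
    {S u x : (∀ j, Ω j) → ℝ}
    (hf : ∀ᵐ a ∂μ i, 0 ≤ f a 0 ∧ ConcaveOn ℝ (Icc 0 1) (f a))
    (hystar : ∀ᵐ a ∂μ i, ystar a ∈ Icc (0 : ℝ) 1 ∧
        ∀ z ∈ Icc (0 : ℝ) 1, f a z - p * z ≤ f a (ystar a) - p * ystar a)
    (hS : ∀ᵐ ω ∂Measure.pi μ, 0 ≤ S ω) (hSi : ∀ ω a, S (update ω i a) = S ω)
    (hu : ∀ᵐ ω ∂Measure.pi μ, ∀ z ∈ Icc 0 (max 0 (1 - S ω)), f (ω i) z - p * z ≤ u ω)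
    (hx : ∀ ω, x ω ∈ Icc (0 : ℝ) 1) (hρ : 0 ≤ ρ)
    (hρS : ρ ≤ ∫ ω, max 0 (1 - S ω) ∂Measure.pi μ)
    (hR_int : Integrable (fun ω => max 0 (1 - S ω)) (Measure.pi μ))
    (hu_int : Integrable u (Measure.pi μ))
    (hfx_int : Integrable (fun ω => f (ω i) (x ω)) (Measure.pi μ))
    (hx_int : Integrable x (Measure.pi μ)) :
    ρ * ∫ ω, (f (ω i) (x ω) - p * x ω) ∂Measure.pi μ ≤ ∫ ω, u ω ∂Measure.pi μ := by
  set R := fun ω => max 0 (1 - S ω)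
  set G := fun ω => max (f (ω i) (x ω) - p * x ω) 0
  have hgain_int : Integrable (fun ω => f (ω i) (x ω) - p * x ω) (Measure.pi μ) :=
    hfx_int.sub (hx_int.const_mul p)
  have hle : ∀ᵐ ω ∂Measure.pi μ, ∀ ω', ω' i = ω i → R ω * G ω' ≤ u ω := by
    filter_upwards [Measure.tendsto_eval_ae_ae.eventually hf,
      Measure.tendsto_eval_ae_ae.eventually hystar, hS, hu] with ω hfω hyω hSω huω ω' hω'
    have hRω : R ω ∈ Icc (0 : ℝ) 1 := ⟨le_max_left _ _, max_le zero_le_one (by linarith)⟩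
    have hopt := hyω.2 0 (left_mem_Icc.2 zero_le_one)
    rw [mul_zero, sub_zero] at hopt
    have hG : G ω' ≤ f (ω i) (ystar (ω i)) - p * ystar (ω i) :=
      max_le (by rw [hω']; exact hyω.2 _ (hx ω')) (hfω.1.trans hopt)
    calc R ω * G ω' ≤ R ω * (f (ω i) (ystar (ω i)) - p * ystar (ω i)) :=
          mul_le_mul_of_nonneg_left hG hRω.1
      _ ≤ f (ω i) (min (ystar (ω i)) (R ω)) - p * min (ystar (ω i)) (R ω) :=
          mul_sub_le_sub_min_of_concaveOn hfω.2 hfω.1 p hyω.1 hRω hopt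
      _ ≤ u ω := huω _ ⟨le_min hyω.1.1 hRω.1, min_le_right _ _⟩
  calc ρ * ∫ ω, (f (ω i) (x ω) - p * x ω) ∂Measure.pi μ
      ≤ ρ * ∫ ω, G ω ∂Measure.pi μ :=
        mul_le_mul_of_nonneg_left
          (integral_mono hgain_int hgain_int.pos_part fun _ => le_max_left _ _) hρ
    _ ≤ (∫ ω, R ω ∂Measure.pi μ) * ∫ ω, G ω ∂Measure.pi μ :=
        mul_le_mul_of_nonneg_right hρS (integral_nonneg fun _ => le_max_right _ _)
    _ ≤ ∫ ω, u ω ∂Measure.pi μ :=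
        integral_mul_integral_le_of_update i hR_int hgain_int.pos_part hu_int
          (fun ω a => by simp only [R, hSi]) hle

theorem mul_integral_sum_le_integral_sum_of_utility {ι Ω : Type*} [Fintype ι]
    [MeasurableSpace Ω] {P : Measure Ω} [IsProbabilityMeasure P] {p ρ : ℝ}
    {vx vy u x y : ι → Ω → ℝ} (hvy : ∀ i ω, vy i ω = u i ω + p * y i ω)
    (hy : ∫ ω, ∑ i, y i ω ∂P = ρ) (hx : ∀ ω, ∑ i, x i ω = 1)
    (hu : ∀ i, ρ * ∫ ω, (vx i ω - p * x i ω) ∂P ≤ ∫ ω, u i ω ∂P)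
    (hu_int : ∀ i, Integrable (u i) P) (hy_int : ∀ i, Integrable (y i) P)
    (hvx_int : ∀ i, Integrable (vx i) P) (hx_int : ∀ i, Integrable (x i) P) :
    ρ * ∫ ω, ∑ i, vx i ω ∂P ≤ ∫ ω, ∑ i, vy i ω ∂P := by
  have hvx_split : ∀ i, ∫ ω, vx i ω ∂P = ∫ ω, (vx i ω - p * x i ω) ∂P + p * ∫ ω, x i ω ∂P :=
    fun i => by rw [integral_sub (hvx_int i) ((hx_int i).const_mul p), integral_const_mul]; ring
  have hvy_split : ∀ i, ∫ ω, vy i ω ∂P = ∫ ω, u i ω ∂P + p * ∫ ω, y i ω ∂P := fun i => by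
    simp only [hvy]
    rw [integral_add (hu_int i) ((hy_int i).const_mul p), integral_const_mul]
  have hx_total : ∑ i, ∫ ω, x i ω ∂P = 1 := by
    simp [← integral_finsetSum _ fun i _ => hx_int i, hx]
  have hy_total : ∑ i, ∫ ω, y i ω ∂P = ρ := by
    rw [← integral_finsetSum _ fun i _ => hy_int i, hy]
  have hvy_int : ∀ i, Integrable (vy i) P := fun i => by
    rw [funext (hvy i)]; exact (hu_int i).add ((hy_int i).const_mul p)
  rw [integral_finsetSum _ fun i _ => hvx_int i, integral_finsetSum _ fun i _ => hvy_int i,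
    Finset.sum_congr rfl fun i _ => hvx_split i, Finset.sum_congr rfl fun i _ => hvy_split i,
    Finset.sum_add_distrib, Finset.sum_add_distrib, ← Finset.mul_sum, ← Finset.mul_sum, hx_total,
    hy_total, mul_add, Finset.mul_sum]
  linarith [Finset.sum_le_sum fun i (_ : i ∈ Finset.univ) => hu i]

theorem stmt_1_general
    {n : ℕ} {Ω : Fin n → Type*} [∀ j, MeasurableSpace (Ω j)]
    (μ : ∀ j, Measure (Ω j)) [∀ j, IsProbabilityMeasure (μ j)]
    (v : ∀ j, Ω j → ℝ → ℝ) (ystar : ∀ j, Ω j → ℝ) (p : ℝ)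
    (hval : ∀ j, ∀ᵐ ωj ∂ μ j, (∀ z ∈ Set.Icc (0:ℝ) 1, 0 ≤ v j ωj z) ∧
        MonotoneOn (v j ωj) (Set.Icc (0:ℝ) 1) ∧ ConcaveOn ℝ (Set.Icc (0:ℝ) 1) (v j ωj))
    (hystar_meas : ∀ j, Measurable (ystar j))
    (hystar : ∀ j, ∀ᵐ ωj ∂ μ j, ystar j ωj ∈ Set.Icc (0:ℝ) 1 ∧
        ∀ z ∈ Set.Icc (0:ℝ) 1, v j ωj z - p * z ≤ v j ωj (ystar j ωj) - p * ystar j ωj)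
    (π : Equiv.Perm (Fin n)) (β : ℝ) (hβ : 0 < β)
    (hβeq : Real.exp (1 / β) = 2 + 1 / β)
    (S y u : Fin n → (∀ j, Ω j) → ℝ)
    (hS : ∀ i ω, S i ω = ∑ j ∈ Finset.univ.filter (fun j => π j < π i), ystar j (ω j))
    (hy : ∀ i ω, y i ω = min (ystar i (ω i)) (max 0 (1 - S i ω)))
    (hu : ∀ i ω, u i ω = v i (ω i) (y i ω) - p * y i ω)
    (humax : ∀ i, ∀ᵐ ω ∂ Measure.pi μ, ∀ z ∈ Set.Icc (0:ℝ) (max 0 (1 - S i ω)),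
        v i (ω i) z - p * z ≤ u i ω)
    -- the expected fraction of the item sold equals ρ₁ = e^{−1/β}
    (hsold : ∫ ω, (∑ i, y i ω) ∂(Measure.pi μ) = Real.exp (-1 / β))
    -- allocation rule
    (x : (∀ j, Ω j) → Fin n → ℝ)
    (hx_mem : ∀ ω j, x ω j ∈ Set.Icc (0:ℝ) 1) (hx_sum : ∀ ω, ∑ j, x ω j = 1)
    -- integrability of the displayed random variables
    (hint_u : ∀ i, Integrable (u i) (Measure.pi μ))
    (hint_y : ∀ i, Integrable (y i) (Measure.pi μ))
    (hint_vx : ∀ i, Integrable (fun ω => v i (ω i) (x ω i)) (Measure.pi μ))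
    (hint_x : ∀ i, Integrable (fun ω => x ω i) (Measure.pi μ)) :
    ∫ ω, (∑ i, v i (ω i) (y i ω)) ∂(Measure.pi μ) ≥
      Real.exp (-1 / β) * ∫ ω, (∑ i, v i (ω i) (x ω i)) ∂(Measure.pi μ) := by
  set P := Measure.pi μ
  have hρ : Real.exp (-1 / β) ≤ 1 - Real.exp (-1 / β) := by
    rw [neg_div]
    exact exp_neg_le_one_sub_exp_neg (by rw [hβeq]; linarith [one_div_pos.2 hβ])
  have hystar_nonneg : ∀ᵐ ω ∂P, ∀ j, 0 ≤ ystar j (ω j) :=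
    ae_all_iff.2 fun j => Measure.tendsto_eval_ae_ae.eventually ((hystar j).mono fun _ h => h.1.1)
  have hS_nonneg : ∀ i, ∀ᵐ ω ∂P, 0 ≤ S i ω := fun i =>
    hystar_nonneg.mono fun ω h => by rw [hS]; exact Finset.sum_nonneg fun j _ => h j
  have hS_update : ∀ i ω a, S i (update ω i a) = S i ω := fun i ω a => by
    simp only [hS]
    exact Finset.sum_apply_update_of_notMem (by simp) _ ω a
  have hR_int : ∀ i, Integrable (fun ω => max 0 (1 - S i ω)) P := fun i =>
    integrable_max_zero_one_sub
      (Measurable.aestronglyMeasurable (by rw [funext (hS i)]; fun_prop)) (hS_nonneg i)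
  have hρR : ∀ i, Real.exp (-1 / β) ≤ ∫ ω, max 0 (1 - S i ω) ∂P := fun i => by
    have hy_int : Integrable (fun ω => ∑ j, y j ω) P := integrable_finsetSum _ fun j _ => hint_y j
    have hremaining : ∀ᵐ ω ∂P, 1 - ∑ j, y j ω ≤ max 0 (1 - S i ω) := by
      filter_upwards [hystar_nonneg] with ω hω
      simpa only [hy, hS] using one_sub_sum_sequential_allocation_le π.injective hω i
    calc Real.exp (-1 / β) ≤ 1 - Real.exp (-1 / β) := hρ
      _ = ∫ ω, (1 - ∑ j, y j ω) ∂P := by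
        rw [integral_sub (integrable_const 1) hy_int, hsold, integral_const]; simp
      _ ≤ ∫ ω, max 0 (1 - S i ω) ∂P :=
        integral_mono_ae ((integrable_const 1).sub hy_int) (hR_int i) hremaining
  exact mul_integral_sum_le_integral_sum_of_utility (fun i ω => by rw [hu]; ring) hsold hx_sum
    (fun i => mul_integral_sub_le_integral_of_remaining_supply i
      ((hval i).mono fun _ h => ⟨h.1 0 (left_mem_Icc.2 zero_le_one), h.2.2⟩) (hystar i)
      (hS_nonneg i) (hS_update i) (humax i) (fun ω => hx_mem ω i) (Real.exp_pos _).le (hρR i)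
      (hR_int i) (hint_u i) (hint_vx i) (hint_x i))
    hint_u hint_y hint_vx hint_x

/-- Let β > 0 satisfy e^{1/β} = 2 + 1/β and ρ₁ = e^{−1/β}. If the price p > 0 is
such that sequential posted pricing in the (arbitrary, fixed) order π sells an expected fraction
E[Σ_i y_i] = ρ₁ of the item, then E[Σ_i v_i(y_i)] ≥ ρ₁·E[Σ_i v_i(x_i)] for every allocation
rule x; in particular the mechanism is a ρ₁-approximation of the optimal social welfare. -/
theorem stmt_1
    {n : ℕ} {Ω : Fin n → Type*} [∀ j, MeasurableSpace (Ω j)]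
    (μ : ∀ j, Measure (Ω j)) [∀ j, IsProbabilityMeasure (μ j)]
    (v : ∀ j, Ω j → ℝ → ℝ) (ystar : ∀ j, Ω j → ℝ) (p : ℝ) (hp : 0 < p)
    (hval : ∀ j, ∀ᵐ ωj ∂ μ j, (∀ z ∈ Set.Icc (0:ℝ) 1, 0 ≤ v j ωj z) ∧
        MonotoneOn (v j ωj) (Set.Icc (0:ℝ) 1) ∧ ConcaveOn ℝ (Set.Icc (0:ℝ) 1) (v j ωj))
    (hystar_meas : ∀ j, Measurable (ystar j))
    (hystar : ∀ j, ∀ᵐ ωj ∂ μ j, ystar j ωj ∈ Set.Icc (0:ℝ) 1 ∧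
        ∀ z ∈ Set.Icc (0:ℝ) 1, v j ωj z - p * z ≤ v j ωj (ystar j ωj) - p * ystar j ωj)
    (π : Equiv.Perm (Fin n)) (β : ℝ) (hβ : 0 < β)
    (hβeq : Real.exp (1 / β) = 2 + 1 / β)
    (S y u : Fin n → (∀ j, Ω j) → ℝ)
    (hS : ∀ i ω, S i ω = ∑ j ∈ Finset.univ.filter (fun j => π j < π i), ystar j (ω j))
    (hy : ∀ i ω, y i ω = min (ystar i (ω i)) (max 0 (1 - S i ω)))
    (hu : ∀ i ω, u i ω = v i (ω i) (y i ω) - p * y i ω)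
    (humax : ∀ i, ∀ᵐ ω ∂ Measure.pi μ, ∀ z ∈ Set.Icc (0:ℝ) (max 0 (1 - S i ω)),
        v i (ω i) z - p * z ≤ u i ω)
    -- the expected fraction of the item sold equals ρ₁ = e^{−1/β}
    (hsold : ∫ ω, (∑ i, y i ω) ∂(Measure.pi μ) = Real.exp (-1 / β))
    -- allocation rule
    (x : (∀ j, Ω j) → Fin n → ℝ) (hx_meas : Measurable x)
    (hx_mem : ∀ ω j, x ω j ∈ Set.Icc (0:ℝ) 1) (hx_sum : ∀ ω, ∑ j, x ω j = 1)
    -- integrability of the displayed random variables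
    (hint_u : ∀ i, Integrable (u i) (Measure.pi μ))
    (hint_vy : ∀ i, Integrable (fun ω => v i (ω i) (y i ω)) (Measure.pi μ))
    (hint_y : ∀ i, Integrable (y i) (Measure.pi μ))
    (hint_vx : ∀ i, Integrable (fun ω => v i (ω i) (x ω i)) (Measure.pi μ))
    (hint_x : ∀ i, Integrable (fun ω => x ω i) (Measure.pi μ)) :
    ∫ ω, (∑ i, v i (ω i) (y i ω)) ∂(Measure.pi μ) ≥
      Real.exp (-1 / β) * ∫ ω, (∑ i, v i (ω i) (x ω i)) ∂(Measure.pi μ) :=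
  stmt_1_general μ v ystar p hval hystar_meas hystar π β hβ hβeq S y u hS hy hu humax hsold x hx_mem
    hx_sum hint_u hint_y hint_vx hint_x
end

section
/- Let ρ₂ = (1 + 2·ln 2)^{−1} ≈ 0.41906 and let π be a permutation of {1,…,n} drawn uniformly at random, independently of ω. Suppose the price p > 0 is such that E_{ω,π}[ Σ_{i=1}^n y_i(ω,π) ] = ρ₂. Then for every allocation rule x, E_{ω,π}[ Σ_{i=1}^n v_i(ω)(y_i(ω,π)) ] ≥ ρ₂ · E[ Σ_{i=1}^n v_i(ω)(x_i(ω)) ]; in particular the mechanism with a uniformly random ordering yields a ρ₂-approximation of the optimal expected social welfare. -/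
/-!
Let `U_i = v_i(y*_i) - p y*_i ≥ 0` be agent `i`'s unconstrained surplus. If a fraction `r` of the
item is left when `i` arrives, concavity and `v_i(0) ≥ 0` give `u_i ≥ r U_i`. A uniformly random
order puts each other agent before `i` with probability `1/2`, so the average over orders of
`r = max 0 (1 - Σ_{j before i} y*_j)` is at least `1 - min 1 T_i`, where `T_i = Σ_{j ≠ i} y*_j`.
As `U_i` depends on `ω_i` only and `T_i` on the other coordinates, independence gives
`E u_i ≥ (1 - E min 1 T_i) E U_i ≥ (1 - ρ₂) E U_i ≥ ρ₂ E U_i`, because whatever the order the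
amount sold is `min 1 Σ_j y*_j ≥ min 1 T_i`, of mean `ρ₂ ≤ 1/2`. The welfare of the mechanism is then
`Σ_i E u_i + p ρ₂ ≥ ρ₂ (Σ_i E U_i + p)`, and no allocation has value above `Σ_i E U_i + p`.
-/

open MeasureTheory Finset

lemma min_max_zero_sub_eq {a A : ℝ} (ha : 0 ≤ a) :
    min a (max 0 (1 - A)) = min 1 (A + a) - min 1 A := by
  rcases le_total 1 A with h | h
  · rw [max_eq_left (by linarith), min_eq_right ha, min_eq_left (by linarith), min_eq_left h,
      sub_self]
  · rw [max_eq_right (by linarith), min_eq_right h]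
    rcases le_total (A + a) 1 with h' | h'
    · rw [min_eq_right h', min_eq_left (by linarith)]; ring
    · rw [min_eq_left h', min_eq_right (by linarith)]

section RandomOrder

variable {n : ℕ}

def predSum (π : Equiv.Perm (Fin n)) (c : Fin n → ℝ) (i : Fin n) : ℝ :=
  ∑ j ∈ univ.filter (fun j => π j < π i), c j

theorem sum_min_max_zero_sub_predSum (π : Equiv.Perm (Fin n)) {c : Fin n → ℝ}
    (hc : ∀ j, 0 ≤ c j) :
    ∑ i, min (c i) (max 0 (1 - predSum π c i)) = min 1 (∑ j, c j) := by
  set P : ℕ → ℝ := fun m => ∑ j ∈ univ.filter (fun j => (π j : ℕ) < m), c j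
  have hstep : ∀ i, predSum π c i = P (π i) ∧ P (π i + 1) = P (π i) + c i := by
    intro i
    refine ⟨sum_congr (filter_congr fun j _ => Fin.lt_def) fun _ _ => rfl, ?_⟩
    have hins : univ.filter (fun j => (π j : ℕ) < π i + 1)
        = insert i (univ.filter fun j => (π j : ℕ) < π i) := by
      ext j
      simp only [mem_filter, mem_univ, true_and, mem_insert, Nat.lt_succ_iff_lt_or_eq,
        Fin.val_inj, π.injective.eq_iff]
      tauto
    simp only [P]
    rw [hins, sum_insert (by simp), add_comm]
  calc ∑ i, min (c i) (max 0 (1 - predSum π c i))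
      = ∑ i, (min 1 (P (π i + 1)) - min 1 (P (π i))) := by
        refine sum_congr rfl fun i _ => ?_
        rw [(hstep i).1, (hstep i).2, min_max_zero_sub_eq (hc i)]
    _ = ∑ k ∈ range n, (min 1 (P (k + 1)) - min 1 (P k)) :=
        (Equiv.sum_comp π (fun k : Fin n => min 1 (P (k + 1)) - min 1 (P k))).trans
          (Fin.sum_univ_eq_sum_range (fun k => min 1 (P (k + 1)) - min 1 (P k)) n)
    _ = min 1 (∑ j, c j) := by
        rw [sum_range_sub (fun m => min 1 (P m))]
        simp [P]

theorem two_mul_card_perm_apply_lt {i j : Fin n} (hij : j ≠ i) :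
    2 * #(univ.filter fun π : Equiv.Perm (Fin n) => π j < π i) = n.factorial := by
  have hswap : #(univ.filter fun π : Equiv.Perm (Fin n) => π j < π i)
      = #(univ.filter fun π : Equiv.Perm (Fin n) => π i < π j) :=
    card_equiv (Equiv.mulRight (Equiv.swap i j)) (by simp [Equiv.Perm.mul_apply])
  have hcompl : (univ.filter fun π : Equiv.Perm (Fin n) => π i < π j)
      = univ.filter fun π => ¬ π j < π i :=
    filter_congr fun π _ => by
      rw [not_lt, le_iff_lt_or_eq, or_iff_left (π.injective.ne hij.symm)]
  have hsplit := card_filter_add_card_filter_not (s := univ) fun π : Equiv.Perm (Fin n) => π j < π i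
  rw [← hcompl, card_univ, Fintype.card_perm, Fintype.card_fin] at hsplit
  omega

theorem sum_perm_predSum (c : Fin n → ℝ) (i : Fin n) :
    ∑ π, predSum π c i = n.factorial / 2 * ∑ j ∈ univ.erase i, c j := by
  calc ∑ π, predSum π c i
      = ∑ j, #(univ.filter fun π : Equiv.Perm (Fin n) => π j < π i) * c j := by
        simp only [predSum, sum_filter]
        rw [sum_comm]
        refine sum_congr rfl fun j _ => ?_
        rw [← sum_filter, sum_const, nsmul_eq_mul]
    _ = ∑ j ∈ univ.erase i, n.factorial / 2 * c j := by
        rw [← sum_erase univ (a := i) (by simp)]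
        refine sum_congr rfl fun j hj => ?_
        rw [← two_mul_card_perm_apply_lt (ne_of_mem_erase hj), Nat.cast_mul]
        ring
    _ = n.factorial / 2 * ∑ j ∈ univ.erase i, c j := (mul_sum _ _ _).symm

theorem one_sub_min_le_average_max_zero_sub_predSum {c : Fin n → ℝ} (hc : ∀ j, 0 ≤ c j)
    (i : Fin n) :
    1 - min 1 (∑ j ∈ univ.erase i, c j)
      ≤ (n.factorial : ℝ)⁻¹ * ∑ π, max 0 (1 - predSum π c i) := by
  set T := ∑ j ∈ univ.erase i, c j
  have hT : 0 ≤ T := sum_nonneg fun j _ => hc j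
  have hnonneg : 0 ≤ (n.factorial : ℝ)⁻¹ * ∑ π, max 0 (1 - predSum π c i) := by positivity
  have hlin : 1 - T / 2 ≤ (n.factorial : ℝ)⁻¹ * ∑ π, max 0 (1 - predSum π c i) :=
    calc 1 - T / 2 = (n.factorial : ℝ)⁻¹ * ∑ π, (1 - predSum π c i) := by
          rw [sum_sub_distrib, sum_perm_predSum, sum_const, card_univ, Fintype.card_perm,
            Fintype.card_fin, nsmul_eq_mul, mul_one]
          field_simp
          rfl
      _ ≤ _ := by gcongr; exact le_max_right _ _
  rcases le_total 1 T with h | h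
  · rw [min_eq_left h, sub_self]; exact hnonneg
  · rw [min_eq_right h]; linarith

end RandomOrder

theorem ConcaveOn.mul_le_apply_mul {s : Set ℝ} {f : ℝ → ℝ} (hf : ConcaveOn ℝ s f)
    (h0 : (0 : ℝ) ∈ s) (hf0 : 0 ≤ f 0) {y r : ℝ} (hy : y ∈ s) (hr0 : 0 ≤ r) (hr1 : r ≤ 1) :
    r * f y ≤ f (r * y) := by
  have h := hf.2 hy h0 hr0 (sub_nonneg.2 hr1) (by ring)
  simp only [smul_eq_mul, mul_zero, add_zero] at h
  nlinarith [mul_nonneg (sub_nonneg.2 hr1) hf0]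

theorem integral_eval_mul_restrict {ι : Type*} [Fintype ι] [DecidableEq ι] {Ω : ι → Type*}
    [∀ j, MeasurableSpace (Ω j)] (μ : ∀ j, Measure (Ω j)) [∀ j, IsProbabilityMeasure (μ j)]
    (i : ι) (G : Ω i → ℝ) (H : (∀ j : {j // ¬ j = i}, Ω j) → ℝ) :
    ∫ ω, G (ω i) * H (fun j => ω j) ∂Measure.pi μ
      = (∫ ω, G (ω i) ∂Measure.pi μ) * ∫ ω, H (fun j => ω j) ∂Measure.pi μ := by
  -- Splitting along `(· = i)` instead would index a factor by `{j // j = i}`, whose `Fintype`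
  -- instance is not the one `measurePreserving_piEquivPiSubtypeProd` uses.
  have hsplit : ∀ (f : (∀ j : {j // ¬ j = i}, Ω j) → ℝ) (g : (∀ j : {j // ¬ ¬ j = i}, Ω j) → ℝ),
      ∫ ω, f (fun j => ω j) * g (fun j => ω j) ∂Measure.pi μ
        = (∫ x, f x ∂Measure.pi fun j : {j // ¬ j = i} => μ j)
          * ∫ x, g x ∂Measure.pi fun j : {j // ¬ ¬ j = i} => μ j :=
    fun f g => ((measurePreserving_piEquivPiSubtypeProd μ (¬ · = i)).integral_comp'
      (fun z => f z.1 * g z.2)).trans (integral_prod_mul f g)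
  have hG := hsplit 1 (fun x => G (x ⟨i, not_not.2 rfl⟩))
  have hH := hsplit H 1
  simp only [Pi.one_apply, mul_one, one_mul, integral_const, probReal_univ, smul_eq_mul] at hG hH
  calc _ = ∫ ω, H (fun j => ω j) * G (ω i) ∂Measure.pi μ := by simp_rw [mul_comm]
    _ = _ := (hsplit H fun x => G (x ⟨i, not_not.2 rfl⟩)).trans (by rw [hG, hH, mul_comm])

theorem integrable_min_one {α : Type*} [MeasurableSpace α] {μ : Measure α} [IsFiniteMeasure μ]
    {f : α → ℝ} (hf : Measurable f) (h0 : 0 ≤ᵐ[μ] f) :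
    Integrable (fun x => min 1 (f x)) μ := by
  refine (integrable_const 1).mono' (measurable_const.min hf).aestronglyMeasurable ?_
  filter_upwards [h0] with x hx
  rw [Real.norm_eq_abs, abs_of_nonneg (le_min zero_le_one hx)]
  exact min_le_left _ _

theorem one_sub_integral_mul_integral_le {ι : Type*} [Fintype ι] [DecidableEq ι]
    {Ω : ι → Type*} [∀ j, MeasurableSpace (Ω j)] {μ : ∀ j, Measure (Ω j)}
    [∀ j, IsProbabilityMeasure (μ j)] {i : ι} {G : Ω i → ℝ}
    {H : (∀ j : {j // ¬ j = i}, Ω j) → ℝ} {W : (∀ j, Ω j) → ℝ}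
    (hG : Integrable (fun ω => G (ω i)) (Measure.pi μ)) (hH : Measurable H)
    (hH1 : ∀ᵐ ω ∂Measure.pi μ, ‖H (fun j => ω j)‖ ≤ 1) (hW : Integrable W (Measure.pi μ))
    (hle : ∀ᵐ ω ∂Measure.pi μ, (1 - H (fun j => ω j)) * G (ω i) ≤ W ω) :
    (1 - ∫ ω, H (fun j => ω j) ∂Measure.pi μ) * ∫ ω, G (ω i) ∂Measure.pi μ
      ≤ ∫ ω, W ω ∂Measure.pi μ := by
  have hHG : Integrable (fun ω => H (fun j => ω j) * G (ω i)) (Measure.pi μ) :=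
    hG.bdd_mul (hH.comp (by fun_prop)).aestronglyMeasurable hH1
  calc (1 - ∫ ω, H (fun j => ω j) ∂Measure.pi μ) * ∫ ω, G (ω i) ∂Measure.pi μ
      = ∫ ω, (1 - H (fun j => ω j)) * G (ω i) ∂Measure.pi μ := by
        simp_rw [sub_mul, one_mul]
        rw [integral_sub hG hHG, mul_comm (∫ ω, H _ ∂_), ← integral_eval_mul_restrict]
        simp_rw [mul_comm]
    _ ≤ ∫ ω, W ω ∂Measure.pi μ := by
        refine integral_mono_ae ((hG.sub hHG).congr (.of_forall fun ω => ?_)) hW hle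
        simp only [Pi.sub_apply]
        ring

structure IsConcaveDemand (p : ℝ) (f : ℝ → ℝ) (y : ℝ) : Prop where
  nonneg : ∀ z ∈ Set.Icc (0 : ℝ) 1, 0 ≤ f z
  concaveOn : ConcaveOn ℝ (Set.Icc 0 1) f
  mem_Icc : y ∈ Set.Icc (0 : ℝ) 1
  surplus_le : ∀ z ∈ Set.Icc (0 : ℝ) 1, f z - p * z ≤ f y - p * y

namespace IsConcaveDemand

variable {p y : ℝ} {f : ℝ → ℝ}

theorem surplus_nonneg (h : IsConcaveDemand p f y) : 0 ≤ f y - p * y := by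
  linarith [h.surplus_le 0 ⟨le_rfl, zero_le_one⟩, h.nonneg 0 ⟨le_rfl, zero_le_one⟩]

theorem mul_surplus_le (h : IsConcaveDemand p f y) {r w : ℝ} (hr : r ∈ Set.Icc (0 : ℝ) 1)
    (hw : ∀ z ∈ Set.Icc 0 r, f z - p * z ≤ w) : r * (f y - p * y) ≤ w := by
  have hry := h.concaveOn.mul_le_apply_mul ⟨le_rfl, zero_le_one⟩
    (h.nonneg 0 ⟨le_rfl, zero_le_one⟩) h.mem_Icc hr.1 hr.2
  have hw' := hw (r * y) ⟨mul_nonneg hr.1 h.mem_Icc.1, mul_le_of_le_one_right hr.1 h.mem_Icc.2⟩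
  linarith

end IsConcaveDemand

section Mechanism

variable {n : ℕ} {Ω : Fin n → Type*} [∀ j, MeasurableSpace (Ω j)] {μ : ∀ j, Measure (Ω j)}
  {v : ∀ j, Ω j → ℝ → ℝ} {ystar : ∀ j, Ω j → ℝ} {p : ℝ}
  {S y u : Equiv.Perm (Fin n) → Fin n → (∀ j, Ω j) → ℝ}

theorem integrable_surplus
    (hgood : ∀ᵐ ω ∂Measure.pi μ, ∀ j, IsConcaveDemand p (v j (ω j)) (ystar j (ω j)))
    (hS : ∀ π i ω, S π i ω = predSum π (fun j => ystar j (ω j)) i)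
    (hy : ∀ π i ω, y π i ω = min (ystar i (ω i)) (max 0 (1 - S π i ω)))
    (hu : ∀ π i ω, u π i ω = v i (ω i) (y π i ω) - p * y π i ω)
    (hint_u : ∀ π i, Integrable (u π i) (Measure.pi μ)) (i : Fin n) :
    Integrable (fun ω => v i (ω i) (ystar i (ω i)) - p * ystar i (ω i)) (Measure.pi μ) := by
  let first : Equiv.Perm (Fin n) := Equiv.swap ⟨0, i.pos⟩ i
  have hfirst : ∀ c, predSum first c i = 0 := fun c =>
    sum_eq_zero fun j hj => absurd (mem_filter.1 hj).2 (by simp [first, Fin.lt_def])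
  refine (hint_u first i).congr ?_
  filter_upwards [hgood] with ω hω
  rw [hu, hy, hS, hfirst, sub_zero, max_eq_right zero_le_one, min_eq_left (hω i).mem_Icc.2]

theorem sum_alloc_ae_eq
    (hgood : ∀ᵐ ω ∂Measure.pi μ, ∀ j, IsConcaveDemand p (v j (ω j)) (ystar j (ω j)))
    (hS : ∀ π i ω, S π i ω = predSum π (fun j => ystar j (ω j)) i)
    (hy : ∀ π i ω, y π i ω = min (ystar i (ω i)) (max 0 (1 - S π i ω)))
    (π : Equiv.Perm (Fin n)) :
    (fun ω => ∑ i, y π i ω) =ᵐ[Measure.pi μ] fun ω => min 1 (∑ j, ystar j (ω j)) := by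
  filter_upwards [hgood] with ω hω
  simp only [hy, hS]
  exact sum_min_max_zero_sub_predSum π fun j => (hω j).mem_Icc.1

theorem average_integral_sum_alloc_eq
    (hgood : ∀ᵐ ω ∂Measure.pi μ, ∀ j, IsConcaveDemand p (v j (ω j)) (ystar j (ω j)))
    (hS : ∀ π i ω, S π i ω = predSum π (fun j => ystar j (ω j)) i)
    (hy : ∀ π i ω, y π i ω = min (ystar i (ω i)) (max 0 (1 - S π i ω))) :
    (n.factorial : ℝ)⁻¹ * ∑ π, ∫ ω, (∑ i, y π i ω) ∂Measure.pi μ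
      = ∫ ω, min 1 (∑ j, ystar j (ω j)) ∂Measure.pi μ := by
  rw [sum_congr rfl fun π _ => integral_congr_ae (sum_alloc_ae_eq hgood hS hy π), sum_const,
    card_univ, Fintype.card_perm, Fintype.card_fin, nsmul_eq_mul,
    inv_mul_cancel_left₀ (by positivity)]

theorem ae_one_sub_min_mul_surplus_le
    (hgood : ∀ᵐ ω ∂Measure.pi μ, ∀ j, IsConcaveDemand p (v j (ω j)) (ystar j (ω j)))
    (hS : ∀ π i ω, S π i ω = predSum π (fun j => ystar j (ω j)) i)
    (humax : ∀ π i, ∀ᵐ ω ∂ Measure.pi μ, ∀ z ∈ Set.Icc (0:ℝ) (max 0 (1 - S π i ω)),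
        v i (ω i) z - p * z ≤ u π i ω) (i : Fin n) :
    ∀ᵐ ω ∂Measure.pi μ, (1 - min 1 (∑ j ∈ univ.erase i, ystar j (ω j)))
        * (v i (ω i) (ystar i (ω i)) - p * ystar i (ω i))
      ≤ (n.factorial : ℝ)⁻¹ * ∑ π, u π i ω := by
  filter_upwards [hgood, ae_all_iff.2 fun π => humax π i] with ω hω hmax
  have hc : ∀ j, 0 ≤ ystar j (ω j) := fun j => (hω j).mem_Icc.1
  calc _ ≤ ((n.factorial : ℝ)⁻¹ * ∑ π, max 0 (1 - predSum π (fun j => ystar j (ω j)) i))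
          * (v i (ω i) (ystar i (ω i)) - p * ystar i (ω i)) :=
        mul_le_mul_of_nonneg_right (one_sub_min_le_average_max_zero_sub_predSum hc i)
          (hω i).surplus_nonneg
    _ = (n.factorial : ℝ)⁻¹ * ∑ π, max 0 (1 - predSum π (fun j => ystar j (ω j)) i)
          * (v i (ω i) (ystar i (ω i)) - p * ystar i (ω i)) := by rw [mul_assoc, sum_mul]
    _ ≤ (n.factorial : ℝ)⁻¹ * ∑ π, u π i ω := by
        gcongr with π
        have hpred : 0 ≤ predSum π (fun j => ystar j (ω j)) i := sum_nonneg fun j _ => hc j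
        refine (hω i).mul_surplus_le ⟨le_max_left _ _, max_le zero_le_one (by linarith)⟩ ?_
        rw [← hS]
        exact hmax π

variable [∀ j, IsProbabilityMeasure (μ j)]

theorem ae_forall_isConcaveDemand
    (hval : ∀ j, ∀ᵐ ωj ∂ μ j, (∀ z ∈ Set.Icc (0:ℝ) 1, 0 ≤ v j ωj z) ∧
        MonotoneOn (v j ωj) (Set.Icc (0:ℝ) 1) ∧ ConcaveOn ℝ (Set.Icc (0:ℝ) 1) (v j ωj))
    (hystar : ∀ j, ∀ᵐ ωj ∂ μ j, ystar j ωj ∈ Set.Icc (0:ℝ) 1 ∧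
        ∀ z ∈ Set.Icc (0:ℝ) 1, v j ωj z - p * z ≤ v j ωj (ystar j ωj) - p * ystar j ωj) :
    ∀ᵐ ω ∂Measure.pi μ, ∀ j, IsConcaveDemand p (v j (ω j)) (ystar j (ω j)) := by
  refine ae_all_iff.2 fun j => Measure.tendsto_eval_ae_ae.eventually (p := fun t =>
    IsConcaveDemand p (v j t) (ystar j t)) ?_
  filter_upwards [hval j, hystar j] with t hvt hyt using ⟨hvt.1, hvt.2.2, hyt.1, hyt.2⟩

theorem integrable_min_one_sum
    (hgood : ∀ᵐ ω ∂Measure.pi μ, ∀ j, IsConcaveDemand p (v j (ω j)) (ystar j (ω j)))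
    (hmeas : ∀ j, Measurable (ystar j)) (s : Finset (Fin n)) :
    Integrable (fun ω => min 1 (∑ j ∈ s, ystar j (ω j))) (Measure.pi μ) :=
  integrable_min_one (Finset.measurable_sum _ fun j _ => (hmeas j).comp (measurable_pi_apply j))
    (hgood.mono fun _ h => sum_nonneg fun j _ => (h j).mem_Icc.1)

theorem one_sub_integral_min_mul_integral_surplus_le
    (hgood : ∀ᵐ ω ∂Measure.pi μ, ∀ j, IsConcaveDemand p (v j (ω j)) (ystar j (ω j)))
    (hmeas : ∀ j, Measurable (ystar j))
    (hS : ∀ π i ω, S π i ω = predSum π (fun j => ystar j (ω j)) i)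
    (humax : ∀ π i, ∀ᵐ ω ∂ Measure.pi μ, ∀ z ∈ Set.Icc (0:ℝ) (max 0 (1 - S π i ω)),
        v i (ω i) z - p * z ≤ u π i ω)
    (hint_u : ∀ π i, Integrable (u π i) (Measure.pi μ)) (i : Fin n)
    (hU : Integrable (fun ω => v i (ω i) (ystar i (ω i)) - p * ystar i (ω i)) (Measure.pi μ)) :
    (1 - ∫ ω, min 1 (∑ j, ystar j (ω j)) ∂Measure.pi μ)
        * ∫ ω, v i (ω i) (ystar i (ω i)) - p * ystar i (ω i) ∂Measure.pi μ
      ≤ (n.factorial : ℝ)⁻¹ * ∑ π, ∫ ω, u π i ω ∂Measure.pi μ := by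
  let H : (∀ j : {j // ¬ j = i}, Ω j) → ℝ :=
    fun ω => min 1 (∑ j : {j // ¬ j = i}, ystar j (ω j))
  have hH : ∀ ω : ∀ j, Ω j, H (fun j => ω j) = min 1 (∑ j ∈ univ.erase i, ystar j (ω j)) :=
    fun ω => congrArg (min 1) (sum_subtype _ (fun j => by simp) fun j => ystar j (ω j)).symm
  have hmono : ∫ ω, H (fun j => ω j) ∂Measure.pi μ
      ≤ ∫ ω, min 1 (∑ j, ystar j (ω j)) ∂Measure.pi μ := by
    simp_rw [hH]
    refine integral_mono_ae (integrable_min_one_sum hgood hmeas _)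
      (integrable_min_one_sum hgood hmeas _) (hgood.mono fun ω h => min_le_min_left _ ?_)
    exact sum_le_sum_of_subset_of_nonneg (erase_subset _ _) fun j _ _ => (h j).mem_Icc.1
  have hH1 : ∀ᵐ ω ∂Measure.pi μ, ‖H (fun j => ω j)‖ ≤ 1 := by
    filter_upwards [hgood] with ω h
    rw [hH, Real.norm_eq_abs,
      abs_of_nonneg (le_min zero_le_one (sum_nonneg fun j _ => (h j).mem_Icc.1))]
    exact min_le_left _ _
  calc _ ≤ (1 - ∫ ω, H (fun j => ω j) ∂Measure.pi μ)
          * ∫ ω, v i (ω i) (ystar i (ω i)) - p * ystar i (ω i) ∂Measure.pi μ :=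
        mul_le_mul_of_nonneg_right (by linarith)
          (integral_nonneg_of_ae (hgood.mono fun ω h => (h i).surplus_nonneg))
    _ ≤ ∫ ω, (n.factorial : ℝ)⁻¹ * ∑ π, u π i ω ∂Measure.pi μ := by
        refine one_sub_integral_mul_integral_le (G := fun t => v i t (ystar i t) - p * ystar i t)
          hU (by fun_prop) hH1 ((integrable_finsetSum _ fun π _ => hint_u π i).const_mul _) ?_
        filter_upwards [ae_one_sub_min_mul_surplus_le hgood hS humax i] with ω h
        rwa [hH]
    _ = _ := by rw [integral_const_mul, integral_finsetSum _ fun π _ => hint_u π i]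

theorem average_welfare_eq
    (hgood : ∀ᵐ ω ∂Measure.pi μ, ∀ j, IsConcaveDemand p (v j (ω j)) (ystar j (ω j)))
    (hmeas : ∀ j, Measurable (ystar j))
    (hS : ∀ π i ω, S π i ω = predSum π (fun j => ystar j (ω j)) i)
    (hy : ∀ π i ω, y π i ω = min (ystar i (ω i)) (max 0 (1 - S π i ω)))
    (hu : ∀ π i ω, u π i ω = v i (ω i) (y π i ω) - p * y π i ω)
    (hint_u : ∀ π i, Integrable (u π i) (Measure.pi μ)) :
    (n.factorial : ℝ)⁻¹ * ∑ π, ∫ ω, (∑ i, v i (ω i) (y π i ω)) ∂Measure.pi μ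
      = (n.factorial : ℝ)⁻¹ * ∑ π, ∑ i, ∫ ω, u π i ω ∂Measure.pi μ
        + p * ((n.factorial : ℝ)⁻¹ * ∑ π, ∫ ω, (∑ i, y π i ω) ∂Measure.pi μ) := by
  have hπ : ∀ π, ∫ ω, (∑ i, v i (ω i) (y π i ω)) ∂Measure.pi μ
      = ∑ i, ∫ ω, u π i ω ∂Measure.pi μ + p * ∫ ω, (∑ i, y π i ω) ∂Measure.pi μ := by
    intro π
    have hy_int : Integrable (fun ω => ∑ i, y π i ω) (Measure.pi μ) :=
      (integrable_min_one_sum hgood hmeas univ).congr (sum_alloc_ae_eq hgood hS hy π).symm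
    have hpt : (fun ω => ∑ i, v i (ω i) (y π i ω))
        = fun ω => ∑ i, u π i ω + p * ∑ i, y π i ω :=
      funext fun ω => by simp only [hu, mul_sum, ← sum_add_distrib, sub_add_cancel]
    rw [hpt, integral_add (integrable_finsetSum _ fun i _ => hint_u π i) (hy_int.const_mul p),
      integral_finsetSum _ fun i _ => hint_u π i, integral_const_mul]
  simp only [hπ, sum_add_distrib, ← mul_sum]
  ring

theorem integral_sum_value_le_sum_integral_surplus_add
    (hgood : ∀ᵐ ω ∂Measure.pi μ, ∀ j, IsConcaveDemand p (v j (ω j)) (ystar j (ω j)))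
    (hU : ∀ i, Integrable (fun ω => v i (ω i) (ystar i (ω i)) - p * ystar i (ω i))
      (Measure.pi μ))
    {x : (∀ j, Ω j) → Fin n → ℝ} (hx_mem : ∀ ω j, x ω j ∈ Set.Icc (0:ℝ) 1)
    (hx_sum : ∀ ω, ∑ j, x ω j = 1) :
    ∫ ω, (∑ i, v i (ω i) (x ω i)) ∂Measure.pi μ
      ≤ ∑ i, ∫ ω, v i (ω i) (ystar i (ω i)) - p * ystar i (ω i) ∂Measure.pi μ + p := by
  have hle : ∀ᵐ ω ∂Measure.pi μ, ∑ i, v i (ω i) (x ω i)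
      ≤ ∑ i, (v i (ω i) (ystar i (ω i)) - p * ystar i (ω i)) + p := by
    filter_upwards [hgood] with ω h
    calc ∑ i, v i (ω i) (x ω i)
        ≤ ∑ i, ((v i (ω i) (ystar i (ω i)) - p * ystar i (ω i)) + p * x ω i) :=
          sum_le_sum fun i _ => by linarith [(h i).surplus_le _ (hx_mem ω i)]
      _ = _ := by rw [sum_add_distrib, ← mul_sum, hx_sum, mul_one]
  have hU_sum := integrable_finsetSum univ fun i _ => hU i
  calc _ ≤ ∫ ω, (∑ i, (v i (ω i) (ystar i (ω i)) - p * ystar i (ω i)) + p) ∂Measure.pi μ :=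
        integral_mono_of_nonneg
          (hgood.mono fun ω h => sum_nonneg fun i _ => (h i).nonneg _ (hx_mem ω i))
          (hU_sum.add (integrable_const p)) hle
    _ = _ := by
        rw [integral_add hU_sum (integrable_const p), integral_finsetSum _ fun i _ => hU i,
          integral_const, probReal_univ, one_smul]

end Mechanism

theorem stmt_2_general
    {n : ℕ} {Ω : Fin n → Type*} [∀ j, MeasurableSpace (Ω j)]
    (μ : ∀ j, Measure (Ω j)) [∀ j, IsProbabilityMeasure (μ j)]
    (v : ∀ j, Ω j → ℝ → ℝ) (ystar : ∀ j, Ω j → ℝ) (p : ℝ)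
    (hval : ∀ j, ∀ᵐ ωj ∂ μ j, (∀ z ∈ Set.Icc (0:ℝ) 1, 0 ≤ v j ωj z) ∧
        MonotoneOn (v j ωj) (Set.Icc (0:ℝ) 1) ∧ ConcaveOn ℝ (Set.Icc (0:ℝ) 1) (v j ωj))
    (hystar_meas : ∀ j, Measurable (ystar j))
    (hystar : ∀ j, ∀ᵐ ωj ∂ μ j, ystar j ωj ∈ Set.Icc (0:ℝ) 1 ∧
        ∀ z ∈ Set.Icc (0:ℝ) 1, v j ωj z - p * z ≤ v j ωj (ystar j ωj) - p * ystar j ωj)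
    (S y u : Equiv.Perm (Fin n) → Fin n → (∀ j, Ω j) → ℝ)
    (hS : ∀ π i ω, S π i ω = ∑ j ∈ Finset.univ.filter (fun j => π j < π i), ystar j (ω j))
    (hy : ∀ π i ω, y π i ω = min (ystar i (ω i)) (max 0 (1 - S π i ω)))
    (hu : ∀ π i ω, u π i ω = v i (ω i) (y π i ω) - p * y π i ω)
    (humax : ∀ π i, ∀ᵐ ω ∂ Measure.pi μ, ∀ z ∈ Set.Icc (0:ℝ) (max 0 (1 - S π i ω)),
        v i (ω i) z - p * z ≤ u π i ω)
    -- the expected fraction of the item sold, over both ω and the uniform random order,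
    -- equals ρ₂ = (1 + 2 ln 2)⁻¹
    (hsold : (Nat.factorial n : ℝ)⁻¹ *
        ∑ π : Equiv.Perm (Fin n), ∫ ω, (∑ i, y π i ω) ∂(Measure.pi μ) =
      (1 + 2 * Real.log 2)⁻¹)
    -- allocation rule
    (x : (∀ j, Ω j) → Fin n → ℝ)
    (hx_mem : ∀ ω j, x ω j ∈ Set.Icc (0:ℝ) 1) (hx_sum : ∀ ω, ∑ j, x ω j = 1)
    -- integrability of the displayed random variables
    (hint_u : ∀ π i, Integrable (u π i) (Measure.pi μ)) :
    (Nat.factorial n : ℝ)⁻¹ *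
        ∑ π : Equiv.Perm (Fin n), ∫ ω, (∑ i, v i (ω i) (y π i ω)) ∂(Measure.pi μ) ≥
      (1 + 2 * Real.log 2)⁻¹ * ∫ ω, (∑ i, v i (ω i) (x ω i)) ∂(Measure.pi μ) := by
  have hgood := ae_forall_isConcaveDemand hval hystar
  have hU := integrable_surplus hgood hS hy hu hint_u
  have hsold_mean := (average_integral_sum_alloc_eq hgood hS hy).symm.trans hsold
  set ρ := (1 + 2 * Real.log 2)⁻¹
  have hρ : ρ ≤ 1 - ρ := by
    have : ρ ≤ 2⁻¹ := inv_anti₀ two_pos (by linarith [Real.log_two_gt_d9])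
    linarith
  have hagent : ∀ i, ρ * ∫ ω, v i (ω i) (ystar i (ω i)) - p * ystar i (ω i) ∂Measure.pi μ
      ≤ (n.factorial : ℝ)⁻¹ * ∑ π, ∫ ω, u π i ω ∂Measure.pi μ := fun i =>
    calc _ ≤ (1 - ρ) * ∫ ω, v i (ω i) (ystar i (ω i)) - p * ystar i (ω i) ∂Measure.pi μ :=
          mul_le_mul_of_nonneg_right hρ
            (integral_nonneg_of_ae (hgood.mono fun ω h => (h i).surplus_nonneg))
      _ ≤ _ := hsold_mean ▸
          one_sub_integral_min_mul_integral_surplus_le hgood hystar_meas hS humax hint_u i (hU i)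
  rw [ge_iff_le, average_welfare_eq hgood hystar_meas hS hy hu hint_u, hsold]
  calc _ ≤ ρ * (∑ i, ∫ ω, v i (ω i) (ystar i (ω i)) - p * ystar i (ω i) ∂Measure.pi μ + p) :=
        mul_le_mul_of_nonneg_left
          (integral_sum_value_le_sum_integral_surplus_add hgood hU hx_mem hx_sum) (by positivity)
    _ = ∑ i, ρ * ∫ ω, v i (ω i) (ystar i (ω i)) - p * ystar i (ω i) ∂Measure.pi μ + p * ρ := by
        rw [mul_add, mul_sum, mul_comm ρ p]
    _ ≤ ∑ i, (n.factorial : ℝ)⁻¹ * ∑ π, ∫ ω, u π i ω ∂Measure.pi μ + p * ρ := by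
        linarith [sum_le_sum fun i (_ : i ∈ univ) => hagent i]
    _ = _ := by rw [← mul_sum, sum_comm]

/-- Let ρ₂ = (1 + 2 ln 2)⁻¹. If the price p > 0 is such that sequential posted
pricing with a uniformly random ordering sells an expected fraction
E_{ω,π}[Σ_i y_i(ω,π)] = ρ₂ of the item (expectation over π written as the average over all
n! permutations), then E_{ω,π}[Σ_i v_i(y_i(ω,π))] ≥ ρ₂·E[Σ_i v_i(x_i)] for every allocation
rule x; in particular the mechanism is a ρ₂-approximation of the optimal social welfare. -/
theorem stmt_2
    {n : ℕ} {Ω : Fin n → Type*} [∀ j, MeasurableSpace (Ω j)]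
    (μ : ∀ j, Measure (Ω j)) [∀ j, IsProbabilityMeasure (μ j)]
    (v : ∀ j, Ω j → ℝ → ℝ) (ystar : ∀ j, Ω j → ℝ) (p : ℝ) (hp : 0 < p)
    (hval : ∀ j, ∀ᵐ ωj ∂ μ j, (∀ z ∈ Set.Icc (0:ℝ) 1, 0 ≤ v j ωj z) ∧
        MonotoneOn (v j ωj) (Set.Icc (0:ℝ) 1) ∧ ConcaveOn ℝ (Set.Icc (0:ℝ) 1) (v j ωj))
    (hystar_meas : ∀ j, Measurable (ystar j))
    (hystar : ∀ j, ∀ᵐ ωj ∂ μ j, ystar j ωj ∈ Set.Icc (0:ℝ) 1 ∧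
        ∀ z ∈ Set.Icc (0:ℝ) 1, v j ωj z - p * z ≤ v j ωj (ystar j ωj) - p * ystar j ωj)
    (S y u : Equiv.Perm (Fin n) → Fin n → (∀ j, Ω j) → ℝ)
    (hS : ∀ π i ω, S π i ω = ∑ j ∈ Finset.univ.filter (fun j => π j < π i), ystar j (ω j))
    (hy : ∀ π i ω, y π i ω = min (ystar i (ω i)) (max 0 (1 - S π i ω)))
    (hu : ∀ π i ω, u π i ω = v i (ω i) (y π i ω) - p * y π i ω)
    (humax : ∀ π i, ∀ᵐ ω ∂ Measure.pi μ, ∀ z ∈ Set.Icc (0:ℝ) (max 0 (1 - S π i ω)),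
        v i (ω i) z - p * z ≤ u π i ω)
    -- the expected fraction of the item sold, over both ω and the uniform random order,
    -- equals ρ₂ = (1 + 2 ln 2)⁻¹
    (hsold : (Nat.factorial n : ℝ)⁻¹ *
        ∑ π : Equiv.Perm (Fin n), ∫ ω, (∑ i, y π i ω) ∂(Measure.pi μ) =
      (1 + 2 * Real.log 2)⁻¹)
    -- allocation rule
    (x : (∀ j, Ω j) → Fin n → ℝ) (hx_meas : Measurable x)
    (hx_mem : ∀ ω j, x ω j ∈ Set.Icc (0:ℝ) 1) (hx_sum : ∀ ω, ∑ j, x ω j = 1)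
    -- integrability of the displayed random variables
    (hint_u : ∀ π i, Integrable (u π i) (Measure.pi μ))
    (hint_vy : ∀ π i, Integrable (fun ω => v i (ω i) (y π i ω)) (Measure.pi μ))
    (hint_y : ∀ π i, Integrable (y π i) (Measure.pi μ))
    (hint_vx : ∀ i, Integrable (fun ω => v i (ω i) (x ω i)) (Measure.pi μ))
    (hint_x : ∀ i, Integrable (fun ω => x ω i) (Measure.pi μ)) :
    (Nat.factorial n : ℝ)⁻¹ *
        ∑ π : Equiv.Perm (Fin n), ∫ ω, (∑ i, v i (ω i) (y π i ω)) ∂(Measure.pi μ) ≥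
      (1 + 2 * Real.log 2)⁻¹ * ∫ ω, (∑ i, v i (ω i) (x ω i)) ∂(Measure.pi μ) :=
  stmt_2_general μ v ystar p hval hystar_meas hystar S y u hS hy hu humax hsold x hx_mem hx_sum
    hint_u
end

section
/- Fix an agent i, a price p > 0 per unit, and a real α > 0, and let π be a permutation of {1,…,n} drawn uniformly at random, independently of ω. Then E_{ω,π}[ min{ α, Σ_{j preceding i in π} y*_j(ω) } ] ≤ max{α, 1/2} · E_{ω,π}[ Σ_{j=1}^n y_j(ω,π) ]. -/
/-!
Summed over all agents, sequential posted pricing hands out exactly `min 1 (∑ j, y*_j)`,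
whatever the order. Pair each order `π` with its reverse: agent `i`'s predecessors under one are
its successors under the other, so the two truncated predecessor sums add up to at most
`min (2α) (∑ j, y*_j) ≤ 2 max{α, 1/2} min 1 (∑ j, y*_j)`. Average over `π` and integrate in `ω`.
-/

open MeasureTheory Finset

theorem min_max_zero_sub_eq_min_add_sub_min {B P c : ℝ} (hc : 0 ≤ c) :
    min c (max 0 (B - P)) = min B (P + c) - min B P := by
  rcases le_total B P with h | h
  · rw [max_eq_left (by linarith), min_eq_right hc, min_eq_left h, min_eq_left (by linarith)]
    ring
  · rw [max_eq_right (by linarith), min_eq_right h]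
    rcases le_total (P + c) B with h' | h'
    · rw [min_eq_right h', min_eq_left (by linarith : c ≤ B - P)]
      ring
    · rw [min_eq_left h', min_eq_right (by linarith : B - P ≤ c)]

theorem sum_min_max_zero_sub_sum_filter_lt {ι β : Type*} [DecidableEq ι] [LinearOrder β]
    (a : ι → ℝ) (ha : ∀ j, 0 ≤ a j) {f : ι → β} (hf : Function.Injective f) {B : ℝ}
    (hB : 0 ≤ B) (s : Finset ι) :
    ∑ j ∈ s, min (a j) (max 0 (B - ∑ k ∈ s.filter (fun k => f k < f j), a k)) =
      min B (∑ j ∈ s, a j) := by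
  induction s using Finset.induction_on_max_value f with
  | empty => simp [hB]
  | insert m s hm hmax ih =>
    have hlt : ∀ x ∈ s, f x < f m := fun x hx =>
      (hmax x hx).lt_of_ne fun h => hm (hf h ▸ hx)
    have hfilter_m : (insert m s).filter (fun k => f k < f m) = s := by
      ext x
      simp only [mem_filter, mem_insert]
      constructor
      · rintro ⟨rfl | hx, hxm⟩
        exacts [absurd hxm (lt_irrefl _), hx]
      · exact fun hx => ⟨Or.inr hx, hlt x hx⟩
    have hfilter_s : ∑ j ∈ s, min (a j) (max 0 (B - ∑ k ∈ (insert m s).filter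
        (fun k => f k < f j), a k)) =
        ∑ j ∈ s, min (a j) (max 0 (B - ∑ k ∈ s.filter (fun k => f k < f j), a k)) :=
      sum_congr rfl fun j hj => by rw [filter_insert, if_neg (hlt j hj).asymm]
    rw [sum_insert hm, hfilter_s, ih, hfilter_m,
      sum_insert hm, min_max_zero_sub_eq_min_add_sub_min (ha m), add_comm (a m)]
    ring

theorem min_add_min_le_two_mul_max_mul_min {α s t T : ℝ} (hs : 0 ≤ s) (ht : 0 ≤ t)
    (hT : s + t ≤ T) :
    min α s + min α t ≤ 2 * (max α (1 / 2) * min 1 T) := by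
  have hα := le_max_left α (1 / 2)
  have hhalf := le_max_right α (1 / 2)
  rcases le_total T 1 with h | h
  · rw [min_eq_right h]
    nlinarith [min_le_right α s, min_le_right α t]
  · rw [min_eq_left h]
    linarith [min_le_left α s, min_le_left α t]

theorem sum_perm_min_sum_filter_lt_le {n : ℕ} (a : Fin n → ℝ) (ha : ∀ j, 0 ≤ a j) (i : Fin n)
    (α : ℝ) :
    ∑ π : Equiv.Perm (Fin n), min α (∑ j ∈ univ.filter (fun j => π j < π i), a j) ≤
      max α (1 / 2) * ∑ _π : Equiv.Perm (Fin n), min 1 (∑ j, a j) := by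
  set f : Equiv.Perm (Fin n) → ℝ := fun π => min α (∑ j ∈ univ.filter (fun j => π j < π i), a j)
  have hpair : ∀ π, f π + f (Fin.revPerm * π) ≤ 2 * (max α (1 / 2) * min 1 (∑ j, a j)) := by
    intro π
    simp only [f, Equiv.Perm.mul_apply, Fin.revPerm_apply, Fin.rev_lt_rev]
    refine min_add_min_le_two_mul_max_mul_min (sum_nonneg fun j _ => ha j)
      (sum_nonneg fun j _ => ha j) ?_
    rw [← sum_union (disjoint_filter.2 fun j _ hj => hj.asymm)]
    exact sum_le_sum_of_subset_of_nonneg (subset_univ _) fun j _ _ => ha j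
  have hrev : ∑ π, f (Fin.revPerm * π) = ∑ π, f π :=
    Equiv.sum_comp (Equiv.mulLeft Fin.revPerm) f
  have := sum_le_sum fun π (_ : π ∈ univ) => hpair π
  rw [sum_add_distrib, hrev, ← mul_sum, ← mul_sum] at this
  linarith

theorem stmt_3_general
    {n : ℕ} {Ω : Fin n → Type*} [∀ j, MeasurableSpace (Ω j)]
    (μ : ∀ j, Measure (Ω j)) [∀ j, IsProbabilityMeasure (μ j)]
    (v : ∀ j, Ω j → ℝ → ℝ) (ystar : ∀ j, Ω j → ℝ) (p : ℝ)
    (hystar : ∀ j, ∀ᵐ ωj ∂ μ j, ystar j ωj ∈ Set.Icc (0:ℝ) 1 ∧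
        ∀ z ∈ Set.Icc (0:ℝ) 1, v j ωj z - p * z ≤ v j ωj (ystar j ωj) - p * ystar j ωj)
    (i : Fin n) (α : ℝ)
    (S y : Equiv.Perm (Fin n) → Fin n → (∀ j, Ω j) → ℝ)
    (hS : ∀ π k ω, S π k ω = ∑ j ∈ Finset.univ.filter (fun j => π j < π k), ystar j (ω j))
    (hy : ∀ π k ω, y π k ω = min (ystar k (ω k)) (max 0 (1 - S π k ω)))
    -- integrability of the displayed random variables
    (hint_min : ∀ π : Equiv.Perm (Fin n),
      Integrable (fun ω => min α (S π i ω)) (Measure.pi μ))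
    (hint_y : ∀ (π : Equiv.Perm (Fin n)) (k : Fin n), Integrable (y π k) (Measure.pi μ)) :
    (Nat.factorial n : ℝ)⁻¹ *
        ∑ π : Equiv.Perm (Fin n), ∫ ω, min α (S π i ω) ∂(Measure.pi μ) ≤
      max α (1 / 2) *
        ((Nat.factorial n : ℝ)⁻¹ *
          ∑ π : Equiv.Perm (Fin n), ∫ ω, (∑ j, y π j ω) ∂(Measure.pi μ)) := by
  have hnonneg : ∀ᵐ ω ∂(Measure.pi μ), ∀ j, 0 ≤ ystar j (ω j) :=
    ae_all_iff.2 fun j => Measure.tendsto_eval_ae_ae.eventually <|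
      (hystar j).mono fun _ h => h.1.1
  have hpointwise : ∀ᵐ ω ∂(Measure.pi μ), ∑ π, min α (S π i ω) ≤
      max α (1 / 2) * ∑ π, ∑ j, y π j ω := by
    filter_upwards [hnonneg] with ω hω
    simp only [hy, hS, sum_min_max_zero_sub_sum_filter_lt _ hω (Equiv.injective _) zero_le_one]
    exact sum_perm_min_sum_filter_lt_le _ hω i α
  have hint_sum_y : ∀ π, Integrable (fun ω => ∑ j, y π j ω) (Measure.pi μ) :=
    fun π => integrable_finsetSum _ fun j _ => hint_y π j
  rw [← integral_finsetSum _ fun π _ => hint_min π,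
    ← integral_finsetSum _ fun π _ => hint_sum_y π, mul_left_comm (max α (1 / 2))]
  refine mul_le_mul_of_nonneg_left ?_ (by positivity)
  rw [← integral_const_mul]
  exact integral_mono_ae (integrable_finsetSum _ fun π _ => hint_min π)
    ((integrable_finsetSum _ fun π _ => hint_sum_y π).const_mul _) hpointwise

/-- For any agent i, price p > 0 and α > 0, with the ordering π drawn uniformly at
random (expectation over π written as the average over all n! permutations),
E_{ω,π}[min{α, Σ_{j≺_π i} y*_j(ω)}] ≤ max{α, 1/2} · E_{ω,π}[Σ_j y_j(ω,π)]. -/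
theorem stmt_3
    {n : ℕ} {Ω : Fin n → Type*} [∀ j, MeasurableSpace (Ω j)]
    (μ : ∀ j, Measure (Ω j)) [∀ j, IsProbabilityMeasure (μ j)]
    (v : ∀ j, Ω j → ℝ → ℝ) (ystar : ∀ j, Ω j → ℝ) (p : ℝ) (hp : 0 < p)
    (hval : ∀ j, ∀ᵐ ωj ∂ μ j, (∀ z ∈ Set.Icc (0:ℝ) 1, 0 ≤ v j ωj z) ∧
        MonotoneOn (v j ωj) (Set.Icc (0:ℝ) 1) ∧ ConcaveOn ℝ (Set.Icc (0:ℝ) 1) (v j ωj))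
    (hystar_meas : ∀ j, Measurable (ystar j))
    (hystar : ∀ j, ∀ᵐ ωj ∂ μ j, ystar j ωj ∈ Set.Icc (0:ℝ) 1 ∧
        ∀ z ∈ Set.Icc (0:ℝ) 1, v j ωj z - p * z ≤ v j ωj (ystar j ωj) - p * ystar j ωj)
    (i : Fin n) (α : ℝ) (hα : 0 < α)
    (S y : Equiv.Perm (Fin n) → Fin n → (∀ j, Ω j) → ℝ)
    (hS : ∀ π k ω, S π k ω = ∑ j ∈ Finset.univ.filter (fun j => π j < π k), ystar j (ω j))
    (hy : ∀ π k ω, y π k ω = min (ystar k (ω k)) (max 0 (1 - S π k ω)))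
    -- integrability of the displayed random variables
    (hint_min : ∀ π : Equiv.Perm (Fin n),
      Integrable (fun ω => min α (S π i ω)) (Measure.pi μ))
    (hint_y : ∀ (π : Equiv.Perm (Fin n)) (k : Fin n), Integrable (y π k) (Measure.pi μ)) :
    (Nat.factorial n : ℝ)⁻¹ *
        ∑ π : Equiv.Perm (Fin n), ∫ ω, min α (S π i ω) ∂(Measure.pi μ) ≤
      max α (1 / 2) *
        ((Nat.factorial n : ℝ)⁻¹ *
          ∑ π : Equiv.Perm (Fin n), ∫ ω, (∑ j, y π j ω) ∂(Measure.pi μ)) :=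
  stmt_3_general μ v ystar p hystar i α S y hS hy hint_min hint_y
end

section
/- Let n ≥ 1, let a_1, …, a_n be nonnegative reals, fix an index i ∈ {1,…,n}, and let α > 0. Averaging over all n! permutations π of {1,…,n}: (1/n!) · Σ_π min{ α, Σ_{j : j precedes i in π} a_j } ≤ max{α, 1/2} · min{ 1, Σ_{j=1}^n a_j }. -/
/-- Averaging over all n! permutations π of {1,…,n}:
(1/n!) · Σ_π min{α, Σ_{j preceding i in π} a_j} ≤ max{α, 1/2} · min{1, Σ_j a_j}. -/
theorem stmt_4 (n : ℕ) (hn : 1 ≤ n) (a : Fin n → ℝ) (ha : ∀ j, 0 ≤ a j)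
    (i : Fin n) (α : ℝ) (hα : 0 < α) :
    (Nat.factorial n : ℝ)⁻¹ *
        ∑ π : Equiv.Perm (Fin n),
          min α (∑ j ∈ Finset.univ.filter (fun j => π j < π i), a j) ≤
      max α (1 / 2) * min 1 (∑ j, a j) := by
  set T := ∑ j, a j with hTdef
  set C := max α (1/2) * min 1 T with hCdef
  have hT0 : 0 ≤ T := Finset.sum_nonneg fun j _ => ha j
  set S := fun π : Equiv.Perm (Fin n) =>
    ∑ j ∈ Finset.univ.filter (fun j => π j < π i), a j with hSdef
  have hS0 : ∀ π, 0 ≤ S π := fun π => Finset.sum_nonneg fun j _ => ha j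
  have key : ∀ x y : ℝ, 0 ≤ x → 0 ≤ y → x + y ≤ T →
      min α x + min α y ≤ 2 * C := by
    intro x y hx hy hxy
    rcases le_total T 1 with h | h
    · rw [hCdef, min_eq_right h]
      nlinarith [min_le_right α x, min_le_right α y, le_max_right α (1/2:ℝ)]
    · rw [hCdef, min_eq_left h]
      nlinarith [min_le_left α x, min_le_left α y, le_max_left α (1/2:ℝ),
        min_le_right α x, min_le_right α y]
  have hpair : ∀ π : Equiv.Perm (Fin n), S π + S (Fin.revPerm * π) ≤ T := by
    intro π
    have hq : Finset.univ.filter (fun j => (Fin.revPerm * π : Equiv.Perm (Fin n)) j < (Fin.revPerm * π : Equiv.Perm (Fin n)) i)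
        = Finset.univ.filter (fun j => π i < π j) := by
      apply Finset.filter_congr
      intro j _
      simp [Equiv.Perm.mul_apply, Fin.rev_lt_rev]
    have hdisj : Disjoint (Finset.univ.filter (fun j => π j < π i))
        (Finset.univ.filter (fun j => π i < π j)) := by
      rw [Finset.disjoint_filter]
      intro j _ h1 h2
      exact absurd h2 (not_lt.mpr h1.le)
    rw [hSdef]
    simp only [hq]
    rw [← Finset.sum_union hdisj]
    exact Finset.sum_le_sum_of_subset_of_nonneg (Finset.subset_univ _)
      (fun j _ _ => ha j)
  have hre : ∑ π : Equiv.Perm (Fin n), min α (S (Fin.revPerm * π))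
      = ∑ π : Equiv.Perm (Fin n), min α (S π) := by
    exact Equiv.sum_comp (Equiv.mulLeft Fin.revPerm) (fun π => min α (S π))
  have hsum : ∑ π : Equiv.Perm (Fin n), (min α (S π) + min α (S (Fin.revPerm * π)))
      ≤ (Nat.factorial n : ℝ) * (2 * C) := by
    calc ∑ π : Equiv.Perm (Fin n), (min α (S π) + min α (S (Fin.revPerm * π)))
        ≤ ∑ _π : Equiv.Perm (Fin n), (2 * C) :=
          Finset.sum_le_sum fun π _ => key _ _ (hS0 π) (hS0 _) (hpair π)
      _ = (Nat.factorial n : ℝ) * (2 * C) := by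
          rw [Finset.sum_const, Finset.card_univ, Fintype.card_perm, Fintype.card_fin,
            nsmul_eq_mul]
  rw [Finset.sum_add_distrib, hre] at hsum
  have hfact : (0:ℝ) < (Nat.factorial n : ℝ) := by
    exact_mod_cast Nat.factorial_pos n
  rw [inv_mul_le_iff₀ hfact]
  linarith
end

section
/- Let X_1, …, X_k be mutually independent random variables on a probability space, each taking values in [0,1] almost surely, and let X = Σ_{i=1}^k X_i. Then E[ min{1, X} ] ≥ 1 − Π_{i=1}^k (1 − E[X_i]). -/
/-!
Pointwise, `1 - ∏ (1 - x i) ≤ min 1 (∑ x i)` for `x i ∈ [0, 1]`: the product is nonnegative,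
and the Weierstrass product inequality `1 - ∑ x i ≤ ∏ (1 - x i)` bounds it from below. Taking
expectations, independence turns `E[∏ (1 - X i)]` into `∏ (1 - E[X i])`.
-/

open MeasureTheory ProbabilityTheory

theorem Finset.one_sub_sum_le_prod_one_sub {ι R : Type*} [CommRing R] [PartialOrder R]
    [IsOrderedRing R] (s : Finset ι) {x : ι → R} (h0 : ∀ i ∈ s, 0 ≤ x i)
    (h1 : ∀ i ∈ s, x i ≤ 1) :
    1 - ∑ i ∈ s, x i ≤ ∏ i ∈ s, (1 - x i) := by
  classical
  induction s using Finset.induction_on with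
  | empty => simp
  | @insert a s ha ih =>
    rw [Finset.forall_mem_insert] at h0 h1
    set S := ∑ i ∈ s, x i
    rw [Finset.prod_insert ha, Finset.sum_insert ha]
    calc 1 - (x a + S) ≤ 1 - (x a + S) + x a * S :=
          le_add_of_nonneg_right (mul_nonneg h0.1 (Finset.sum_nonneg h0.2))
      _ = (1 - x a) * (1 - S) := by ring
      _ ≤ (1 - x a) * ∏ i ∈ s, (1 - x i) :=
          mul_le_mul_of_nonneg_left (ih h0.2 h1.2) (sub_nonneg.2 h1.1)

theorem Finset.one_sub_prod_one_sub_le_min_one_sum {ι R : Type*} [CommRing R] [LinearOrder R]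
    [IsOrderedRing R] (s : Finset ι) {x : ι → R} (h0 : ∀ i ∈ s, 0 ≤ x i)
    (h1 : ∀ i ∈ s, x i ≤ 1) :
    1 - ∏ i ∈ s, (1 - x i) ≤ min 1 (∑ i ∈ s, x i) :=
  le_min (sub_le_self _ (Finset.prod_nonneg fun i hi ↦ sub_nonneg.2 (h1 i hi)))
    (sub_le_comm.1 (s.one_sub_sum_le_prod_one_sub h0 h1))

theorem MeasureTheory.Integrable.of_ae_mem_Icc {α : Type*} {m : MeasurableSpace α}
    {μ : Measure α} [IsFiniteMeasure μ] {f : α → ℝ} {a b : ℝ}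
    (hf : AEStronglyMeasurable f μ)
    (hab : ∀ᵐ x ∂μ, f x ∈ Set.Icc a b) : Integrable f μ :=
  .of_bound hf (max |a| |b|) <| hab.mono fun _ hx ↦ abs_le_max_abs_abs hx.1 hx.2

theorem ProbabilityTheory.iIndepFun.integral_prod_one_sub {Ω ι : Type*} [Fintype ι]
    {m : MeasurableSpace Ω} {μ : Measure Ω} {X : ι → Ω → ℝ} (hX : iIndepFun X μ)
    (hint : ∀ i, Integrable (X i) μ) :
    ∫ ω, ∏ i, (1 - X i ω) ∂μ = ∏ i, (1 - ∫ ω, X i ω ∂μ) := by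
  have := hX.isProbabilityMeasure
  rw [hX.integral_fun_prod_comp (f := fun _ x ↦ 1 - x) (fun i ↦ (hint i).aemeasurable)
    (fun _ ↦ by fun_prop)]
  refine Finset.prod_congr rfl fun i _ ↦ ?_
  rw [integral_sub (integrable_const 1) (hint i), integral_const, probReal_univ, one_smul]

/-- For mutually independent random variables X_1, …, X_k with values in [0,1]
almost surely, E[min{1, Σ_i X_i}] ≥ 1 − Π_i (1 − E[X_i]). -/
theorem stmt_5 {Ω : Type*} [MeasureSpace Ω] [IsProbabilityMeasure (ℙ : Measure Ω)]
    {k : ℕ} (X : Fin k → Ω → ℝ)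
    (hmeas : ∀ i, Measurable (X i))
    (hindep : iIndepFun X ℙ)
    (hmem : ∀ i, ∀ᵐ ω, X i ω ∈ Set.Icc (0:ℝ) 1) :
    ∫ ω, min 1 (∑ i, X i ω) ≥ 1 - ∏ i, (1 - ∫ ω, X i ω) := by
  have hmem_all := ae_all_iff.2 hmem
  have hint i : Integrable (X i) := .of_ae_mem_Icc (hmeas i).aestronglyMeasurable (hmem i)
  have hprod_int : Integrable fun ω ↦ ∏ i, (1 - X i ω) :=
    .of_ae_mem_Icc (by fun_prop) (a := 0) (b := 1) <| hmem_all.mono fun ω hω ↦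
      ⟨Finset.prod_nonneg fun i _ ↦ sub_nonneg.2 (hω i).2,
        Finset.prod_le_one (fun i _ ↦ sub_nonneg.2 (hω i).2)
          fun i _ ↦ sub_le_self _ (hω i).1⟩
  have hmin_int : Integrable fun ω ↦ min 1 (∑ i, X i ω) :=
    .of_ae_mem_Icc (by fun_prop) (a := 0) (b := 1) <| hmem_all.mono fun ω hω ↦
      ⟨le_min zero_le_one (Finset.sum_nonneg fun i _ ↦ (hω i).1), min_le_left _ _⟩
  calc 1 - ∏ i, (1 - ∫ ω, X i ω) = ∫ ω, (1 - ∏ i, (1 - X i ω)) := by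
        rw [integral_sub (integrable_const 1) hprod_int, hindep.integral_prod_one_sub hint,
          integral_const, probReal_univ, one_smul]
    _ ≤ ∫ ω, min 1 (∑ i, X i ω) :=
        integral_mono_ae ((integrable_const 1).sub hprod_int) hmin_int <| hmem_all.mono
          fun ω hω ↦ Finset.univ.one_sub_prod_one_sub_le_min_one_sum (fun i _ ↦ (hω i).1)
            fun i _ ↦ (hω i).2
end

section
/- Let X' be a nonnegative integrable random variable, let X be a random variable with values in [0,1] that is independent of X', and let Y be a {0,1}-valued random variable independent of X' with Pr[Y = 1] = E[X]. Then E[ min{1, X' + X} ] ≥ E[ min{1, X' + Y} ]. -/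
/-!
For `a ≥ 0` the map `t ↦ min 1 (a + t)` is concave on `[0, 1]`, so it lies above its chord
`min 1 a + t * (1 - min 1 a)`, with equality at the endpoints `t ∈ {0, 1}`. Taking expectations
and using independence of `X'` from the summand, both sides become
`E[min 1 X'] + E[summand] * E[1 - min 1 X']`, and `E[Y] = Pr[Y = 1] = E[X]`.
-/

open MeasureTheory ProbabilityTheory

lemma min_one_add_mul_one_sub_min_le {a t : ℝ} (ha : 0 ≤ a) (ht : t ∈ Set.Icc (0 : ℝ) 1) :
    min 1 a + t * (1 - min 1 a) ≤ min 1 (a + t) := by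
  obtain ⟨ht0, ht1⟩ := ht
  rcases le_total 1 a with h | h
  · rw [min_eq_left h, min_eq_left (by linarith)]
    simp
  · rw [min_eq_right h]
    rcases le_total 1 (a + t) with h' | h'
    · rw [min_eq_left h']; nlinarith
    · rw [min_eq_right h']; nlinarith

lemma min_one_add_eq_of_eq_zero_or_eq_one {a y : ℝ} (ha : 0 ≤ a) (hy : y = 0 ∨ y = 1) :
    min 1 (a + y) = min 1 a + y * (1 - min 1 a) := by
  rcases hy with rfl | rfl
  · simp
  · rw [min_eq_left (by linarith)]; ring

section

variable {Ω : Type*} [MeasurableSpace Ω] {μ : Measure Ω} {X Z : Ω → ℝ}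

lemma min_one_mem_Icc_ae (hX0 : ∀ᵐ ω ∂μ, 0 ≤ X ω) :
    ∀ᵐ ω ∂μ, min 1 (X ω) ∈ Set.Icc (0 : ℝ) 1 := by
  filter_upwards [hX0] with ω hω
  exact ⟨le_min zero_le_one hω, min_le_left _ _⟩

lemma integrable_mul_one_sub_min_one (hX : Measurable X) (hX0 : ∀ᵐ ω ∂μ, 0 ≤ X ω)
    (hZ : Integrable Z μ) : Integrable (fun ω => Z ω * (1 - min 1 (X ω))) μ := by
  refine hZ.mul_bdd (c := 1)
    (measurable_const.sub (measurable_const.min hX)).aestronglyMeasurable ?_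
  filter_upwards [min_one_mem_Icc_ae hX0] with ω ⟨h0, h1⟩
  rw [Real.norm_eq_abs, abs_le]
  constructor <;> linarith

lemma integral_eq_measureReal_of_eq_zero_or_eq_one (hZ : Measurable Z)
    (hZ01 : ∀ᵐ ω ∂μ, Z ω = 0 ∨ Z ω = 1) :
    ∫ ω, Z ω ∂μ = μ.real {ω | Z ω = 1} := by
  have hZ_ind : Z =ᵐ[μ] Set.indicator {ω | Z ω = 1} 1 := by
    filter_upwards [hZ01] with ω hω
    rcases hω with h | h <;> simp [h]
  have hset : MeasurableSet {ω | Z ω = 1} := hZ (measurableSet_singleton 1)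
  rw [integral_congr_ae hZ_ind]
  exact integral_indicator_one hset

variable [IsProbabilityMeasure μ]

lemma integrable_min_one_s6 (hX : Measurable X) (hX0 : ∀ᵐ ω ∂μ, 0 ≤ X ω) :
    Integrable (fun ω => min 1 (X ω)) μ :=
  .of_mem_Icc 0 1 (measurable_const.min hX).aemeasurable (min_one_mem_Icc_ae hX0)

lemma integral_min_one_add_mul_one_sub_min (hX : Measurable X) (hX0 : ∀ᵐ ω ∂μ, 0 ≤ X ω)
    (hZ : Integrable Z μ) (hXZ : IndepFun X Z μ) :
    ∫ ω, (min 1 (X ω) + Z ω * (1 - min 1 (X ω))) ∂μ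
      = ∫ ω, min 1 (X ω) ∂μ + (∫ ω, Z ω ∂μ) * ∫ ω, (1 - min 1 (X ω)) ∂μ := by
  have hindep : IndepFun Z (fun ω => 1 - min 1 (X ω)) μ :=
    (hXZ.comp (measurable_const.sub (measurable_const.min measurable_id)) measurable_id).symm
  rw [integral_add (integrable_min_one_s6 hX hX0) (integrable_mul_one_sub_min_one hX hX0 hZ),
    hindep.integral_fun_mul_eq_mul_integral hZ.aestronglyMeasurable
      (measurable_const.sub (measurable_const.min hX)).aestronglyMeasurable]

theorem integral_min_one_add_mul_le_integral_min_one_add (hX : Measurable X)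
    (hZ : Measurable Z) (hX0 : ∀ᵐ ω ∂μ, 0 ≤ X ω) (hZ01 : ∀ᵐ ω ∂μ, Z ω ∈ Set.Icc (0 : ℝ) 1)
    (hXZ : IndepFun X Z μ) :
    ∫ ω, min 1 (X ω) ∂μ + (∫ ω, Z ω ∂μ) * ∫ ω, (1 - min 1 (X ω)) ∂μ
      ≤ ∫ ω, min 1 (X ω + Z ω) ∂μ := by
  have hZ_int : Integrable Z μ := .of_mem_Icc 0 1 hZ.aemeasurable hZ01
  rw [← integral_min_one_add_mul_one_sub_min hX hX0 hZ_int hXZ]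
  refine integral_mono_ae ?_ ?_ ?_
  · exact (integrable_min_one_s6 hX hX0).add (integrable_mul_one_sub_min_one hX hX0 hZ_int)
  · refine .of_mem_Icc 0 1 (measurable_const.min (hX.add hZ)).aemeasurable ?_
    filter_upwards [hX0, hZ01] with ω hXω hZω
    exact ⟨le_min zero_le_one (by linarith [hZω.1]), min_le_left _ _⟩
  · filter_upwards [hX0, hZ01] with ω hXω hZω
    exact min_one_add_mul_one_sub_min_le hXω hZω

theorem integral_min_one_add_of_eq_zero_or_eq_one (hX : Measurable X) (hZ : Measurable Z)
    (hX0 : ∀ᵐ ω ∂μ, 0 ≤ X ω) (hZ01 : ∀ᵐ ω ∂μ, Z ω = 0 ∨ Z ω = 1) (hXZ : IndepFun X Z μ) :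
    ∫ ω, min 1 (X ω + Z ω) ∂μ
      = ∫ ω, min 1 (X ω) ∂μ + μ.real {ω | Z ω = 1} * ∫ ω, (1 - min 1 (X ω)) ∂μ := by
  have hZ_int : Integrable Z μ := by
    refine .of_mem_Icc 0 1 hZ.aemeasurable ?_
    filter_upwards [hZ01] with ω hω
    rcases hω with h | h <;> simp [h]
  rw [← integral_eq_measureReal_of_eq_zero_or_eq_one hZ hZ01,
    ← integral_min_one_add_mul_one_sub_min hX hX0 hZ_int hXZ]
  refine integral_congr_ae ?_
  filter_upwards [hX0, hZ01] with ω hXω hZω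
  exact min_one_add_eq_of_eq_zero_or_eq_one hXω hZω

end

theorem stmt_6_general {Ω : Type*} [MeasureSpace Ω] [IsProbabilityMeasure (ℙ : Measure Ω)]
    (X' X Y : Ω → ℝ)
    (hX'meas : Measurable X') (hXmeas : Measurable X) (hYmeas : Measurable Y)
    (hX'nonneg : ∀ᵐ ω, 0 ≤ X' ω)
    (hXmem : ∀ᵐ ω, X ω ∈ Set.Icc (0:ℝ) 1)
    (hYval : ∀ᵐ ω, Y ω = 0 ∨ Y ω = 1)
    (hindepX : IndepFun X' X ℙ)
    (hindepY : IndepFun X' Y ℙ)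
    (hYmean : (ℙ {ω | Y ω = 1}).toReal = ∫ ω, X ω) :
    ∫ ω, min 1 (X' ω + X ω) ≥ ∫ ω, min 1 (X' ω + Y ω) := by
  rw [ge_iff_le, integral_min_one_add_of_eq_zero_or_eq_one hX'meas hYmeas hX'nonneg hYval hindepY,
    measureReal_def, hYmean]
  exact integral_min_one_add_mul_le_integral_min_one_add hX'meas hXmeas hX'nonneg hXmem hindepX

/-- Replacing a [0,1]-valued summand X, independent of the nonnegative X',
by a Bernoulli variable Y, independent of X', with Pr[Y = 1] = E[X], can only decrease
E[min{1, X' + ·}]. -/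
theorem stmt_6 {Ω : Type*} [MeasureSpace Ω] [IsProbabilityMeasure (ℙ : Measure Ω)]
    (X' X Y : Ω → ℝ)
    (hX'meas : Measurable X') (hXmeas : Measurable X) (hYmeas : Measurable Y)
    (hX'nonneg : ∀ᵐ ω, 0 ≤ X' ω) (hX'int : Integrable X')
    (hXmem : ∀ᵐ ω, X ω ∈ Set.Icc (0:ℝ) 1)
    (hYval : ∀ᵐ ω, Y ω = 0 ∨ Y ω = 1)
    (hindepX : IndepFun X' X ℙ)
    (hindepY : IndepFun X' Y ℙ)
    (hYmean : (ℙ {ω | Y ω = 1}).toReal = ∫ ω, X ω) :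
    ∫ ω, min 1 (X' ω + X ω) ≥ ∫ ω, min 1 (X' ω + Y ω) :=
  stmt_6_general X' X Y hX'meas hXmeas hYmeas hX'nonneg hXmem hYval hindepX hindepY hYmean
end

section
/- Let k be a positive integer and let z_1, …, z_k be reals with 0 ≤ z_i ≤ 1 for each i. Then the function t ↦ 1 − Π_{i=1}^k (1 − t·z_i) is concave on the interval [0,1]. -/
/-!
Each factor `t ↦ 1 - t z_i` is affine, nonnegative and antitone on `[0, 1]`. A product of
nonnegative convex functions that vary in the same direction is convex (`ConvexOn.mul`), so
inductively the product `∏ i, (1 - t z_i)` is convex and its complement in `1` is concave.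
-/

open Finset

section
variable {𝕜 G R ι : Type*}

lemma AntitoneOn.finset_prod_of_nonneg [CommSemiring R] [PartialOrder R] [IsOrderedRing R]
    [Preorder G] {s : Set G} {t : Finset ι} {f : ι → G → R}
    (hf₀ : ∀ i ∈ t, ∀ x ∈ s, 0 ≤ f i x) (hf : ∀ i ∈ t, AntitoneOn (f i) s) :
    AntitoneOn (fun x => ∏ i ∈ t, f i x) s := fun _ hx _ hy hxy =>
  prod_le_prod (fun i hi => hf₀ i hi _ hy) (fun i hi => hf i hi hx hy hxy)

lemma ConvexOn.finset_prod_of_antitoneOn [CommRing 𝕜] [LinearOrder 𝕜] [IsStrictOrderedRing 𝕜]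
    [AddCommGroup G] [Module 𝕜 G] [LinearOrder G] {s : Set G} {t : Finset ι} {f : ι → G → 𝕜}
    (hs : Convex 𝕜 s) (hf : ∀ i ∈ t, ConvexOn 𝕜 s (f i)) (hf₀ : ∀ i ∈ t, ∀ x ∈ s, 0 ≤ f i x)
    (hanti : ∀ i ∈ t, AntitoneOn (f i) s) :
    ConvexOn 𝕜 s (fun x => ∏ i ∈ t, f i x) := by
  induction t using Finset.cons_induction with
  | empty => simpa only [prod_empty] using convexOn_const (1 : 𝕜) hs
  | cons j t hj ih =>
    simp only [forall_mem_cons] at hf hf₀ hanti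
    simp only [prod_cons]
    exact hf.1.mul (ih hf.2 hf₀.2 hanti.2) (fun x hx => hf₀.1 x hx)
      (fun x hx => prod_nonneg fun i hi => hf₀.2 i hi x hx)
      (hanti.1.monovaryOn (.finset_prod_of_nonneg hf₀.2 hanti.2))
end

lemma convexOn_one_sub_mul_const {s : Set ℝ} (hs : Convex ℝ s) (c : ℝ) :
    ConvexOn ℝ s (fun t => 1 - t * c) :=
  ⟨hs, fun x _ y _ a b _ _ hab => le_of_eq (by simp only [smul_eq_mul]; linear_combination -hab)⟩

theorem stmt_9_general (k : ℕ) (z : Fin k → ℝ)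
    (hz : ∀ i, z i ∈ Set.Icc (0:ℝ) 1) :
    ConcaveOn ℝ (Set.Icc (0:ℝ) 1) (fun t => 1 - ∏ i, (1 - t * z i)) := by
  have hconvex : ConvexOn ℝ (Set.Icc (0:ℝ) 1) (fun t => ∏ i, (1 - t * z i)) :=
    .finset_prod_of_antitoneOn (convex_Icc 0 1)
      (fun i _ => convexOn_one_sub_mul_const (convex_Icc 0 1) (z i))
      (fun i _ t ht => by nlinarith [ht.1, ht.2, (hz i).1, (hz i).2])
      (fun i _ x _ y _ hxy => by nlinarith [(hz i).1])
  exact (concaveOn_const 1 (convex_Icc 0 1)).sub hconvex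

/-- For 0 ≤ z_i ≤ 1, the function t ↦ 1 − Π_i (1 − t·z_i) is concave on [0,1]. -/
theorem stmt_9 (k : ℕ) (hk : 0 < k) (z : Fin k → ℝ)
    (hz : ∀ i, z i ∈ Set.Icc (0:ℝ) 1) :
    ConcaveOn ℝ (Set.Icc (0:ℝ) 1) (fun t => 1 - ∏ i, (1 - t * z i)) :=
  stmt_9_general k z hz
end

section
/- Let κ ≥ 1, p > 0, and let v : ℝ → ℝ be nondecreasing and concave on [0,1] with v(0) = 0, having derivative d at 0 (from the right within [0,1]) satisfying d ≤ κ·v(1) and d ≥ 2κ·p. If y* ∈ [0,1] maximizes z ↦ v(z) − p·z over [0,1], then y* ≥ (v(1) − p)/(κ·v(1) − p) ≥ 1/(2κ − 1). -/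
/-!
A concave function lies below its tangent line at `0`, so `v y* ≤ d y* ≤ κ v(1) y*`. Comparing
the maximizer with the choice `z = 1` gives `v(1) - p ≤ v y* - p y* ≤ (κ v(1) - p) y*`. The second
bound is the monotonicity of `t ↦ (t - p) / (κ t - p)` for `κ ≥ 1`, evaluated at `v(1) ≥ 2p`.
-/

lemma ConcaveOn.le_add_mul_sub_of_hasDerivWithinAt {S : Set ℝ} {f : ℝ → ℝ} {x y f' : ℝ}
    (hfc : ConcaveOn ℝ S f) (hx : x ∈ S) (hy : y ∈ S) (hxy : x ≤ y)
    (hf : HasDerivWithinAt f f' S x) :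
    f y ≤ f x + f' * (y - x) := by
  rcases hxy.eq_or_lt with rfl | hxy
  · simp
  have hslope := hfc.slope_le_of_hasDerivWithinAt hx hy hxy hf
  rw [slope_def_field, div_le_iff₀ (sub_pos.mpr hxy)] at hslope
  linarith

lemma one_div_two_mul_sub_one_le_div {κ p t : ℝ} (hκ : 1 ≤ κ) (hp : 0 < p) (ht : 2 * p ≤ t) :
    1 / (2 * κ - 1) ≤ (t - p) / (κ * t - p) := by
  rw [div_le_div_iff₀ (by linarith) (by nlinarith)]
  nlinarith [mul_nonneg (sub_nonneg.mpr hκ) (sub_nonneg.mpr ht)]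

theorem stmt_10_general (κ p d : ℝ) (hκ : 1 ≤ κ) (hp : 0 < p)
    (v : ℝ → ℝ)
    (hconc : ConcaveOn ℝ (Set.Icc (0:ℝ) 1) v) (hv0 : v 0 = 0)
    (hderiv : HasDerivWithinAt v d (Set.Icc (0:ℝ) 1) 0)
    (hd1 : d ≤ κ * v 1) (hd2 : 2 * κ * p ≤ d)
    (ystar : ℝ) (hy : ystar ∈ Set.Icc (0:ℝ) 1)
    (hmax : ∀ z ∈ Set.Icc (0:ℝ) 1, v z - p * z ≤ v ystar - p * ystar) :
    (v 1 - p) / (κ * v 1 - p) ≤ ystar ∧ 1 / (2 * κ - 1) ≤ (v 1 - p) / (κ * v 1 - p) := by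
  have hv1 : 2 * p ≤ v 1 := by nlinarith
  have hden : 0 < κ * v 1 - p := by nlinarith
  have htangent : v ystar ≤ d * ystar := by
    simpa [hv0] using
      hconc.le_add_mul_sub_of_hasDerivWithinAt (Set.left_mem_Icc.mpr zero_le_one) hy hy.1 hderiv
  have hopt : v 1 - p ≤ v ystar - p * ystar := by simpa using hmax 1 ⟨zero_le_one, le_rfl⟩
  refine ⟨?_, one_div_two_mul_sub_one_le_div hκ hp hv1⟩
  rw [div_le_iff₀ hden]
  nlinarith [mul_le_mul_of_nonneg_right hd1 hy.1]

/-- A concave nondecreasing valuation v with v(0) = 0, right derivative d at 0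
(within [0,1]) with d ≤ κ·v(1) and d ≥ 2κ·p, has any utility maximizer y* at price p satisfying
y* ≥ (v(1) − p)/(κ·v(1) − p) ≥ 1/(2κ − 1). -/
theorem stmt_10 (κ p d : ℝ) (hκ : 1 ≤ κ) (hp : 0 < p)
    (v : ℝ → ℝ) (hmono : MonotoneOn v (Set.Icc (0:ℝ) 1))
    (hconc : ConcaveOn ℝ (Set.Icc (0:ℝ) 1) v) (hv0 : v 0 = 0)
    (hderiv : HasDerivWithinAt v d (Set.Icc (0:ℝ) 1) 0)
    (hd1 : d ≤ κ * v 1) (hd2 : 2 * κ * p ≤ d)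
    (ystar : ℝ) (hy : ystar ∈ Set.Icc (0:ℝ) 1)
    (hmax : ∀ z ∈ Set.Icc (0:ℝ) 1, v z - p * z ≤ v ystar - p * ystar) :
    (v 1 - p) / (κ * v 1 - p) ≤ ystar ∧ 1 / (2 * κ - 1) ≤ (v 1 - p) / (κ * v 1 - p) :=
  stmt_10_general κ p d hκ hp v hconc hv0 hderiv hd1 hd2 ystar hy hmax
end

section
/- Let κ ≥ 1, let n be a positive integer, and let h_1, …, h_n ∈ [0,1] and z_1, …, z_n ∈ [0,1] satisfy z_i ≥ (1 − h_i)/(2κ − 1) for every i. Then 1 − Π_{i=1}^n (1 − z_i) ≥ (1/(2κ − 1)) · ( 1 − Π_{i=1}^n h_i ). Consequently, for any p > 0, if p·(1 − Π_{i=1}^n (1 − z_i)) ≤ 1 then p·(1 − Π_{i=1}^n h_i) ≤ 2κ − 1. -/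
lemma aux_prod {ι : Type*} (R : ℝ) (hR : 1 ≤ R) (s : Finset ι) (hs : s.Nonempty)
    (h : ι → ℝ) (hh : ∀ i ∈ s, h i ∈ Set.Icc (0:ℝ) 1) :
    ∏ i ∈ s, (R - 1 + h i) ≤ R ^ (s.card - 1) * (R - 1 + ∏ i ∈ s, h i) := by
  induction hs using Finset.Nonempty.cons_induction with
  | singleton a => simp
  | cons a s ha hs ih =>
    have hha := hh a (Finset.mem_cons_self a s)
    have hh' : ∀ i ∈ s, h i ∈ Set.Icc (0:ℝ) 1 := fun i hi => hh i (Finset.mem_cons_of_mem hi)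
    have hP : (0:ℝ) ≤ ∏ i ∈ s, h i := Finset.prod_nonneg fun i hi => (hh' i hi).1
    have hP1 : ∏ i ∈ s, h i ≤ 1 := Finset.prod_le_one (fun i hi => (hh' i hi).1) (fun i hi => (hh' i hi).2)
    have hna : 0 ≤ R - 1 + h a := by linarith [hha.1]
    rw [Finset.prod_cons, Finset.prod_cons]
    calc (R - 1 + h a) * ∏ i ∈ s, (R - 1 + h i)
        ≤ (R - 1 + h a) * (R ^ (s.card - 1) * (R - 1 + ∏ i ∈ s, h i)) :=
          mul_le_mul_of_nonneg_left (ih hh') hna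
      _ = R ^ (s.card - 1) * ((R - 1 + h a) * (R - 1 + ∏ i ∈ s, h i)) := by ring
      _ ≤ R ^ (s.card - 1) * (R * (R - 1 + h a * ∏ i ∈ s, h i)) := by
          apply mul_le_mul_of_nonneg_left _ (pow_nonneg (by linarith) _)
          nlinarith [hha.1, hha.2, mul_nonneg (sub_nonneg.2 hha.2) (sub_nonneg.2 hP1)]
      _ = R ^ (s.card - 1 + 1) * (R - 1 + h a * ∏ i ∈ s, h i) := by ring
      _ = R ^ ((Finset.cons a s ha).card - 1) * (R - 1 + h a * ∏ i ∈ s, h i) := by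
          have := hs.card_pos
          rw [Finset.card_cons]
          congr 2
          omega

/-- If h_i, z_i ∈ [0,1] with z_i ≥ (1 − h_i)/(2κ − 1) for all i, then
1 − Π_i (1 − z_i) ≥ (1 − Π_i h_i)/(2κ − 1); consequently, for p > 0,
p·(1 − Π_i (1 − z_i)) ≤ 1 implies p·(1 − Π_i h_i) ≤ 2κ − 1. -/
theorem stmt_12 (κ : ℝ) (hκ : 1 ≤ κ) (n : ℕ) (hn : 0 < n)
    (h z : Fin n → ℝ)
    (hh : ∀ i, h i ∈ Set.Icc (0:ℝ) 1) (hzmem : ∀ i, z i ∈ Set.Icc (0:ℝ) 1)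
    (hz : ∀ i, (1 - h i) / (2 * κ - 1) ≤ z i) :
    (1 - ∏ i, h i) / (2 * κ - 1) ≤ 1 - ∏ i, (1 - z i) ∧
      ∀ p : ℝ, 0 < p → p * (1 - ∏ i, (1 - z i)) ≤ 1 → p * (1 - ∏ i, h i) ≤ 2 * κ - 1 := by
  set R := 2 * κ - 1 with hRdef
  have hR : 1 ≤ R := by simp [hRdef]; linarith
  have hR0 : 0 < R := by linarith
  have hmain : (1 - ∏ i, h i) / R ≤ 1 - ∏ i, (1 - z i) := by
    have h1 : ∏ i, (1 - z i) ≤ ∏ i, ((R - 1 + h i) / R) := by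
      apply Finset.prod_le_prod
      · intro i _; linarith [(hzmem i).2]
      · intro i _
        have e : (R - 1 + h i) / R = 1 - (1 - h i) / R := by
          field_simp; ring
        rw [e]; linarith [hz i]
    have h2 : ∏ i, ((R - 1 + h i) / R) = (∏ i, (R - 1 + h i)) / R ^ n := by
      rw [Finset.prod_div_distrib]
      simp
    have h3 : ∏ i, (R - 1 + h i) ≤ R ^ (n - 1) * (R - 1 + ∏ i, h i) := by
      have := aux_prod R hR Finset.univ (Finset.univ_nonempty_iff.2 (Fin.pos_iff_nonempty.mp hn)) h
        (fun i _ => hh i)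
      simpa using this
    have hRn : (0:ℝ) < R ^ n := pow_pos hR0 n
    have h4 : (∏ i, (R - 1 + h i)) / R ^ n ≤ (R - 1 + ∏ i, h i) / R := by
      rw [div_le_div_iff₀ hRn hR0]
      have hn1 : n - 1 + 1 = n := Nat.succ_pred_eq_of_pos hn
      calc (∏ i, (R - 1 + h i)) * R ≤ (R ^ (n - 1) * (R - 1 + ∏ i, h i)) * R :=
            mul_le_mul_of_nonneg_right h3 (le_of_lt hR0)
        _ = (R - 1 + ∏ i, h i) * R ^ n := by
            have e : R ^ n = R ^ (n - 1) * R := by rw [← pow_succ, hn1]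
            rw [e]; ring
    have h5 : ∏ i, (1 - z i) ≤ (R - 1 + ∏ i, h i) / R := le_trans h1 (h2 ▸ h4)
    have : (R - 1 + ∏ i, h i) / R = 1 - (1 - ∏ i, h i) / R := by field_simp; ring
    linarith [this ▸ h5]
  refine ⟨hmain, fun p hp hple => ?_⟩
  have := mul_le_mul_of_nonneg_left hmain (le_of_lt hp)
  have h6 : p * ((1 - ∏ i, h i) / R) ≤ 1 := le_trans this hple
  calc p * (1 - ∏ i, h i) = (p * ((1 - ∏ i, h i) / R)) * R := by field_simp
    _ ≤ 1 * R := mul_le_mul_of_nonneg_right h6 (le_of_lt hR0)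
    _ = R := one_mul R
end

section
/- Let G : [0,1] × [0,1] → ℝ be nonnegative, with x ↦ G(x,t) nonincreasing on [0,1] for every fixed t ∈ [0,1], and with s ↦ s·G(0, 1 − s) concave on [0,1]. Let q : [0,1] → [0,1] be measurable with x ↦ q(x)·G(x, 1 − q(x)) integrable, and set r = ∫_0^1 q(x) dx. Then ∫_0^1 q(x)·G(x, 1 − q(x)) dx ≤ r·G(0, 1 − r). -/
/-!
Pointwise, monotonicity of `G` in `x` gives `q(x)·G(x, 1 - q(x)) ≤ f(q(x))` with
`f(s) = s·G(0, 1 - s)`, so the claim is Jensen's inequality `∫ f ∘ q ≤ f (∫ q)` for the concave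
`f`. Since `f` need not be continuous at the endpoints, Jensen is proved by integrating a
supporting line of `f` at `∫ q` when `∫ q` is interior, and from `q` being a.e. constant when
`∫ q` is an endpoint.
-/

open MeasureTheory Set

variable {S : Set ℝ} {f : ℝ → ℝ} {x : ℝ}

lemma ConvexOn.add_rightDeriv_mul_sub_le (hf : ConvexOn ℝ S f) (hx : x ∈ interior S) {y : ℝ}
    (hy : y ∈ S) : f x + derivWithin f (Ioi x) x * (y - x) ≤ f y := by
  rcases lt_trichotomy y x with hyx | rfl | hxy
  · have hslope := (hf.slope_le_leftDeriv_of_mem_interior hy hx hyx).trans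
      (hf.leftDeriv_le_rightDeriv_of_mem_interior hx)
    rw [slope_def_field, div_le_iff₀ (sub_pos.2 hyx)] at hslope
    linarith
  · simp
  · have hslope := hf.rightDeriv_le_slope_of_mem_interior hx hy hxy
    rw [slope_def_field, le_div_iff₀ (sub_pos.2 hxy)] at hslope
    linarith

lemma ConcaveOn.exists_le_add_mul_sub (hf : ConcaveOn ℝ S f) (hx : x ∈ interior S) :
    ∃ c, ∀ y ∈ S, f y ≤ f x + c * (y - x) := by
  refine ⟨-derivWithin (-f) (Ioi x) x, fun y hy => ?_⟩
  have hline := hf.neg.add_rightDeriv_mul_sub_le hx hy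
  simp only [Pi.neg_apply] at hline
  linarith

variable {α : Type*} [MeasurableSpace α] {μ : Measure α} [IsProbabilityMeasure μ]

lemma ConcaveOn.integral_le_of_ae_le_comp {a b : ℝ} (hf : ConcaveOn ℝ (Icc a b) f)
    {q h : α → ℝ} (hq : Integrable q μ) (hqmem : ∀ᵐ ω ∂μ, q ω ∈ Icc a b) (hh : Integrable h μ)
    (hle : ∀ᵐ ω ∂μ, h ω ≤ f (q ω)) : ∫ ω, h ω ∂μ ≤ f (∫ ω, q ω ∂μ) := by
  set r := ∫ ω, q ω ∂μ
  have hconst : ∀ c : ℝ, ∫ _ : α, c ∂μ = c := by simp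
  have har : a ≤ r := by
    simpa [hconst] using integral_mono_ae (integrable_const a) hq (hqmem.mono fun _ h => h.1)
  have hrb : r ≤ b := by
    simpa [hconst] using integral_mono_ae hq (integrable_const b) (hqmem.mono fun _ h => h.2)
  by_cases hr : r ∈ interior (Icc a b)
  · obtain ⟨c, hc⟩ := hf.exists_le_add_mul_sub hr
    have hlin : Integrable (fun ω => c * (q ω - r)) μ :=
      (hq.sub (integrable_const r)).const_mul c
    calc ∫ ω, h ω ∂μ ≤ ∫ ω, f r + c * (q ω - r) ∂μ :=
          integral_mono_ae hh ((integrable_const _).add hlin)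
            (by filter_upwards [hle, hqmem] with ω h1 h2 using h1.trans (hc _ h2))
      _ = f r := by
          rw [integral_add (integrable_const _) hlin, integral_const_mul,
            integral_sub hq (integrable_const r), hconst, hconst]
          ring
  · have hqr : q =ᵐ[μ] fun _ => r := by
      rw [interior_Icc, mem_Ioo, not_and_or, not_lt, not_lt] at hr
      rcases hr with hra | hbr
      · refine ((integral_eq_iff_of_ae_le (integrable_const r) hq ?_).1 (hconst r)).symm
        filter_upwards [hqmem] with ω hω using (le_antisymm hra har).trans_le hω.1
      · refine (integral_eq_iff_of_ae_le hq (integrable_const r) ?_).1 (hconst r).symm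
        filter_upwards [hqmem] with ω hω using hω.2.trans (le_antisymm hrb hbr).ge
    calc ∫ ω, h ω ∂μ ≤ ∫ _ : α, f r ∂μ :=
          integral_mono_ae hh (integrable_const _)
            (by filter_upwards [hle, hqr] with ω h1 h2 using h2 ▸ h1)
      _ = f r := hconst _

theorem stmt_13_general (G : ℝ → ℝ → ℝ)
    (hGanti : ∀ t ∈ Set.Icc (0:ℝ) 1, AntitoneOn (fun x => G x t) (Set.Icc (0:ℝ) 1))
    (hGconc : ConcaveOn ℝ (Set.Icc (0:ℝ) 1) (fun s => s * G 0 (1 - s)))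
    (q : ℝ → ℝ) (hq : Measurable q) (hqmem : ∀ x ∈ Set.Icc (0:ℝ) 1, q x ∈ Set.Icc (0:ℝ) 1)
    (hint : IntegrableOn (fun x => q x * G x (1 - q x)) (Set.Icc (0:ℝ) 1))
    (r : ℝ) (hr : r = ∫ x in (0:ℝ)..1, q x) :
    ∫ x in (0:ℝ)..1, q x * G x (1 - q x) ≤ r * G 0 (1 - r) := by
  have : IsProbabilityMeasure (volume.restrict (Icc (0:ℝ) 1)) := ⟨by simp⟩
  have hmem : ∀ᵐ x ∂(volume.restrict (Icc (0:ℝ) 1)), x ∈ Icc (0:ℝ) 1 :=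
    ae_restrict_mem measurableSet_Icc
  have hqint : IntegrableOn q (Icc 0 1) := by
    refine Integrable.of_bound hq.aestronglyMeasurable 1 ?_
    filter_upwards [hmem] with x hx
    rw [Real.norm_eq_abs, abs_of_nonneg (hqmem x hx).1]
    exact (hqmem x hx).2
  rw [hr, intervalIntegral.integral_of_le zero_le_one, intervalIntegral.integral_of_le zero_le_one,
    ← integral_Icc_eq_integral_Ioc, ← integral_Icc_eq_integral_Ioc]
  refine hGconc.integral_le_of_ae_le_comp hqint (hmem.mono hqmem) hint ?_
  filter_upwards [hmem] with x hx
  obtain ⟨hq0, hq1⟩ := hqmem x hx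
  have hG : G x (1 - q x) ≤ G 0 (1 - q x) :=
    hGanti _ ⟨by linarith, by linarith⟩ ⟨le_rfl, zero_le_one⟩ hx hx.1
  exact mul_le_mul_of_nonneg_left hG hq0

/-- If G(·,t) is nonnegative and nonincreasing in its first argument and
s ↦ s·G(0, 1−s) is concave on [0,1], then for any measurable q : [0,1] → [0,1] with
r = ∫_0^1 q(x) dx, we have ∫_0^1 q(x)·G(x, 1−q(x)) dx ≤ r·G(0, 1−r). -/
theorem stmt_13 (G : ℝ → ℝ → ℝ)
    (hGnonneg : ∀ x ∈ Set.Icc (0:ℝ) 1, ∀ t ∈ Set.Icc (0:ℝ) 1, 0 ≤ G x t)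
    (hGanti : ∀ t ∈ Set.Icc (0:ℝ) 1, AntitoneOn (fun x => G x t) (Set.Icc (0:ℝ) 1))
    (hGconc : ConcaveOn ℝ (Set.Icc (0:ℝ) 1) (fun s => s * G 0 (1 - s)))
    (q : ℝ → ℝ) (hq : Measurable q) (hqmem : ∀ x ∈ Set.Icc (0:ℝ) 1, q x ∈ Set.Icc (0:ℝ) 1)
    (hint : IntegrableOn (fun x => q x * G x (1 - q x)) (Set.Icc (0:ℝ) 1))
    (r : ℝ) (hr : r = ∫ x in (0:ℝ)..1, q x) :
    ∫ x in (0:ℝ)..1, q x * G x (1 - q x) ≤ r * G 0 (1 - r) :=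
  stmt_13_general G hGanti hGconc q hq hqmem hint r hr
end

section
/- Let κ > 1 and let ρ > 1 satisfy ρ − ln ρ = 1 + ln κ; define v : [0,1] → ℝ by v(x) = κ·x for 0 ≤ x ≤ 1/(κρ) and v(x) = 1 + (ln x)/ρ for 1/(κρ) ≤ x ≤ 1. Then ρ ≥ 1 + ln κ, and for every price p > 0 and every x* ∈ [0,1] maximizing z ↦ v(z) − p·z over [0,1], the revenue satisfies p·x* ≤ 1/ρ. Since v(1) = 1, any linear pricing recovers at most a 1/(1 + ln κ) fraction of the buyer's full value for the item. -/
/-! Below the kink 1/(κρ) the buyer's surplus v(x*) − p x* is at least v(0) − 0 = 0, so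
p x* ≤ κ x* ≤ 1/ρ. Above the kink v is 1 + (ln x)/ρ to the left of x*, and the one-sided
first-order condition 1/(ρ x*) − p ≥ 0 gives p x* ≤ 1/ρ. The bound ρ ≥ 1 + ln κ is ln ρ ≥ 0. -/

open Real Set

theorem IsMaxOn.nonneg_of_hasDerivWithinAt_Icc {f : ℝ → ℝ} {f' a b : ℝ} (hab : a < b)
    (hmax : IsMaxOn f (Icc a b) b) (hf : HasDerivWithinAt f f' (Icc a b) b) : 0 ≤ f' := by
  have hcone : a - b ∈ posTangentConeAt (Icc a b) b :=
    sub_mem_posTangentConeAt_of_segment_subset ((convex_Icc a b).segment_subset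
      (right_mem_Icc.2 hab.le) (left_mem_Icc.2 hab.le))
  have h := hmax.localize.hasFDerivWithinAt_nonpos hf.hasFDerivWithinAt hcone
  simp only [ContinuousLinearMap.toSpanSingleton_apply, smul_eq_mul] at h
  nlinarith

theorem mul_le_inv_of_isMaxOn_log_sub_mul {ρ p b x : ℝ} (hb : 0 < b) (hbx : b < x)
    (hmax : IsMaxOn (fun z => log z / ρ - p * z) (Icc b x) x) : p * x ≤ 1 / ρ := by
  have hx : 0 < x := hb.trans hbx
  have hderiv : HasDerivWithinAt (fun z => log z / ρ - p * z) (x⁻¹ / ρ - p) (Icc b x) x :=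
    (((hasDerivAt_log hx.ne').div_const ρ).sub ((hasDerivAt_id x).const_mul p)).hasDerivWithinAt
      |>.congr_deriv (by ring)
  have h := hmax.nonneg_of_hasDerivWithinAt_Icc hbx hderiv
  calc p * x ≤ x⁻¹ / ρ * x := by nlinarith
    _ = 1 / ρ := by field_simp

/-- For κ > 1 and ρ > 1 with ρ − ln ρ = 1 + ln κ and the valuation
v(x) = κx on [0, 1/(κρ)], v(x) = 1 + (ln x)/ρ on [1/(κρ), 1]: we have ρ ≥ 1 + ln κ, and for
every price p > 0 and every utility maximizer x* ∈ [0,1], the revenue satisfies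
p·x* ≤ 1/ρ ≤ 1/(1 + ln κ), i.e. linear pricing recovers at most a 1/(1 + ln κ) fraction of
the buyer's full value v(1) = 1. -/
theorem stmt_16 (κ ρ : ℝ) (hκ : 1 < κ) (hρ : 1 < ρ)
    (hρκ : ρ - Real.log ρ = 1 + Real.log κ)
    (v : ℝ → ℝ)
    (hv : ∀ x, v x = if x ≤ 1 / (κ * ρ) then κ * x else 1 + Real.log x / ρ) :
    1 + Real.log κ ≤ ρ ∧
    ∀ p : ℝ, 0 < p → ∀ xstar ∈ Set.Icc (0:ℝ) 1,
      (∀ z ∈ Set.Icc (0:ℝ) 1, v z - p * z ≤ v xstar - p * xstar) →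
      p * xstar ≤ 1 / ρ ∧ p * xstar ≤ 1 / (1 + Real.log κ) := by
  have hkink : 0 < 1 / (κ * ρ) := by positivity
  have hρ_ge : 1 + log κ ≤ ρ := by linarith [log_nonneg hρ.le]
  refine ⟨hρ_ge, fun p _ x ⟨hx0, hx1⟩ hmax => ?_⟩
  have hrev : p * x ≤ 1 / ρ := by
    rcases le_or_gt x (1 / (κ * ρ)) with hx | hx
    · have hIR := hmax 0 ⟨le_rfl, zero_le_one⟩
      rw [hv, hv, if_pos hkink.le, if_pos hx] at hIR
      calc p * x ≤ κ * x := by linarith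
        _ ≤ κ * (1 / (κ * ρ)) := by gcongr
        _ = 1 / ρ := by field_simp
    · refine mul_le_inv_of_isMaxOn_log_sub_mul (b := (1 / (κ * ρ) + x) / 2) (by positivity)
        (by linarith) fun z ⟨hbz, hzx⟩ => ?_
      have hz := hmax z ⟨by linarith, by linarith⟩
      rw [hv, hv, if_neg (by linarith), if_neg hx.not_ge] at hz
      show log z / ρ - p * z ≤ log x / ρ - p * x
      linarith
  exact ⟨hrev, hrev.trans (one_div_le_one_div_of_le (by linarith [log_nonneg hκ.le]) hρ_ge)⟩
end
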